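/- arXiv:2604.02918 — 8 statements merged into one kernel-verified Lean document; each statement's English description precedes it below -/
import Mathlib

section
/- Let X be a real normed linear space. For all x, y ∈ X \ {0}, one has ‖x/‖x‖ − y/‖y‖‖ ≤ 4‖x − y‖/(‖x‖ + ‖y‖). In particular DW(X) ≤ 4. -/
/-!
Write `x/‖x‖ - y/‖y‖ = (x - y)/‖x‖ + (1/‖x‖ - 1/‖y‖) y`. The second term has norm
`|‖y‖ - ‖x‖| / ‖x‖ ≤ ‖x - y‖ / ‖x‖`, so the left side is at most `2‖x - y‖/‖x‖`, and by symmetry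
at most `2‖x - y‖ / max ‖x‖ ‖y‖ ≤ 4‖x - y‖ / (‖x‖ + ‖y‖)`.
-/

section

variable {X : Type*} [NormedAddCommGroup X] [NormedSpace ℝ X]

theorem norm_inv_norm_smul_sub_le_two_mul_div_left {x y : X} (hx : x ≠ 0) (hy : y ≠ 0) :
    ‖‖x‖⁻¹ • x - ‖y‖⁻¹ • y‖ ≤ 2 * ‖x - y‖ / ‖x‖ := by
  have hx0 : 0 < ‖x‖ := norm_pos_iff.mpr hx
  have hy0 : 0 < ‖y‖ := norm_pos_iff.mpr hy
  have hsplit : ‖x‖⁻¹ • x - ‖y‖⁻¹ • y = ‖x‖⁻¹ • (x - y) + (‖x‖⁻¹ - ‖y‖⁻¹) • y := by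
    rw [smul_sub, sub_smul]; abel
  have hcoeff : |‖x‖⁻¹ - ‖y‖⁻¹| * ‖y‖ = |‖y‖ - ‖x‖| / ‖x‖ := by
    rw [inv_sub_inv hx0.ne' hy0.ne', abs_div, abs_of_pos (mul_pos hx0 hy0)]
    field_simp
  have hdiff : |‖y‖ - ‖x‖| ≤ ‖x - y‖ := by
    rw [norm_sub_rev x y]; exact abs_norm_sub_norm_le y x
  calc ‖‖x‖⁻¹ • x - ‖y‖⁻¹ • y‖
      ≤ ‖x‖⁻¹ * ‖x - y‖ + |‖x‖⁻¹ - ‖y‖⁻¹| * ‖y‖ := by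
        rw [hsplit]
        refine (norm_add_le _ _).trans_eq ?_
        rw [norm_smul, norm_smul, Real.norm_eq_abs, Real.norm_eq_abs, abs_of_pos (inv_pos.mpr hx0)]
    _ = (‖x - y‖ + |‖y‖ - ‖x‖|) / ‖x‖ := by rw [hcoeff]; field_simp
    _ ≤ 2 * ‖x - y‖ / ‖x‖ := by gcongr; linarith

theorem norm_inv_norm_smul_sub_le_two_mul_div_max {x y : X} (hx : x ≠ 0) (hy : y ≠ 0) :
    ‖‖x‖⁻¹ • x - ‖y‖⁻¹ • y‖ ≤ 2 * ‖x - y‖ / max ‖x‖ ‖y‖ := by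
  rcases le_total ‖y‖ ‖x‖ with hyx | hxy
  · rw [max_eq_left hyx]
    exact norm_inv_norm_smul_sub_le_two_mul_div_left hx hy
  · rw [max_eq_right hxy, norm_sub_rev, norm_sub_rev x]
    exact norm_inv_norm_smul_sub_le_two_mul_div_left hy hx

theorem norm_inv_norm_smul_sub_le_four_mul_div_add {x y : X} (hx : x ≠ 0) (hy : y ≠ 0) :
    ‖‖x‖⁻¹ • x - ‖y‖⁻¹ • y‖ ≤ 4 * ‖x - y‖ / (‖x‖ + ‖y‖) := by
  have hsum : ‖x‖ + ‖y‖ ≤ 2 * max ‖x‖ ‖y‖ := by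
    linarith [le_max_left ‖x‖ ‖y‖, le_max_right ‖x‖ ‖y‖]
  calc ‖‖x‖⁻¹ • x - ‖y‖⁻¹ • y‖ ≤ 2 * ‖x - y‖ / max ‖x‖ ‖y‖ :=
        norm_inv_norm_smul_sub_le_two_mul_div_max hx hy
    _ = 4 * ‖x - y‖ / (2 * max ‖x‖ ‖y‖) := by field_simp; ring
    _ ≤ 4 * ‖x - y‖ / (‖x‖ + ‖y‖) := by gcongr

end

/-- Dunkl–Williams inequality: for all nonzero `x, y` in a real normed space,
`‖x/‖x‖ − y/‖y‖‖ ≤ 4‖x − y‖/(‖x‖ + ‖y‖)`; in particular the Dunkl–Williams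
constant `DW(X)` is at most `4`. -/
theorem dunkl_williams_inequality {X : Type*} [NormedAddCommGroup X] [NormedSpace ℝ X] :
    (∀ x y : X, x ≠ 0 → y ≠ 0 →
      ‖‖x‖⁻¹ • x - ‖y‖⁻¹ • y‖ ≤ 4 * ‖x - y‖ / (‖x‖ + ‖y‖)) ∧
    sSup {c : ℝ | ∃ x y : X, x ≠ 0 ∧ y ≠ 0 ∧ x ≠ y ∧
      c = (‖x‖ + ‖y‖) / ‖x - y‖ * ‖‖x‖⁻¹ • x - ‖y‖⁻¹ • y‖} ≤ 4 := by
  refine ⟨fun x y hx hy => norm_inv_norm_smul_sub_le_four_mul_div_add hx hy, ?_⟩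
  refine Real.sSup_le ?_ zero_le_four
  rintro c ⟨x, y, hx, hy, hxy, rfl⟩
  have hsum : 0 < ‖x‖ + ‖y‖ := add_pos (norm_pos_iff.mpr hx) (norm_pos_iff.mpr hy)
  have hdist : 0 < ‖x - y‖ := norm_sub_pos_iff.mpr hxy
  calc (‖x‖ + ‖y‖) / ‖x - y‖ * ‖‖x‖⁻¹ • x - ‖y‖⁻¹ • y‖
      ≤ (‖x‖ + ‖y‖) / ‖x - y‖ * (4 * ‖x - y‖ / (‖x‖ + ‖y‖)) := by
        gcongr; exact norm_inv_norm_smul_sub_le_four_mul_div_add hx hy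
    _ = 4 := by field_simp
end

section
/- Let X be a nontrivial real normed linear space. Then DW(X) = sup{ ‖u+v‖ / ‖γu+(1−γ)v‖ : u, v ∈ S_X, 0 < γ < 1/2 }. -/
/-!
The two sets coincide. Normalise `x` and `-y` to the unit vectors `u = x / ‖x‖` and
`v = -y / ‖y‖`. With `γ = ‖x‖ / (‖x‖ + ‖y‖)` one has `γ u + (1 - γ) v = (x - y) / (‖x‖ + ‖y‖)`,
so the Dunkl–Williams quotient of `(x, y)` is exactly `‖u + v‖ / ‖γ u + (1 - γ) v‖`; conversely
`(γ u, -(1 - γ) v)` recovers any triple `(u, v, γ)`. Swapping `u` and `v` replaces `γ` by `1 - γ`,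
which brings `γ` below `1/2`, and the boundary case `γ = 1/2` gives the value `2`, attained as
well by `u = v`.
-/

namespace DunklWilliams

variable {X : Type*} [NormedAddCommGroup X] [NormedSpace ℝ X]

noncomputable def dunklWilliamsRatio (x y : X) : ℝ :=
  (‖x‖ + ‖y‖) / ‖x - y‖ * ‖‖x‖⁻¹ • x - ‖y‖⁻¹ • y‖

noncomputable def convexRatio (u v : X) (γ : ℝ) : ℝ :=
  ‖u + v‖ / ‖γ • u + (1 - γ) • v‖

theorem convexCombination_normalize {x y : X} (hx : x ≠ 0) (hy : y ≠ 0) :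
    (‖x‖ / (‖x‖ + ‖y‖)) • (‖x‖⁻¹ • x) + (1 - ‖x‖ / (‖x‖ + ‖y‖)) • -(‖y‖⁻¹ • y) =
      (‖x‖ + ‖y‖)⁻¹ • (x - y) := by
  have ha : 0 < ‖x‖ := norm_pos_iff.mpr hx
  have hb : 0 < ‖y‖ := norm_pos_iff.mpr hy
  match_scalars <;> field_simp; ring

theorem dunklWilliamsRatio_eq_convexRatio {x y : X} (hx : x ≠ 0) (hy : y ≠ 0) :
    dunklWilliamsRatio x y =
      convexRatio (‖x‖⁻¹ • x) (-(‖y‖⁻¹ • y)) (‖x‖ / (‖x‖ + ‖y‖)) := by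
  have hab : 0 < ‖x‖ + ‖y‖ := by positivity
  rw [dunklWilliamsRatio, convexRatio, convexCombination_normalize hx hy, norm_smul,
    Real.norm_of_nonneg (inv_nonneg.mpr hab.le), ← sub_eq_add_neg]
  simp only [div_eq_mul_inv, mul_inv, inv_inv]
  ring

theorem convexRatio_comm (u v : X) (γ : ℝ) : convexRatio u v γ = convexRatio v u (1 - γ) := by
  rw [convexRatio, convexRatio, sub_sub_cancel, add_comm u, add_comm (γ • u)]

theorem convexRatio_half {u v : X} (h : u + v ≠ 0) : convexRatio u v (1 / 2) = 2 := by
  have : ‖u + v‖ ≠ 0 := norm_ne_zero_iff.mpr h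
  rw [convexRatio, show (1 : ℝ) - 1 / 2 = 1 / 2 by norm_num, ← smul_add, norm_smul]
  norm_num
  field_simp

theorem convexRatio_self {u : X} (hu : u ≠ 0) (γ : ℝ) : convexRatio u u γ = 2 := by
  have : ‖u‖ ≠ 0 := norm_ne_zero_iff.mpr hu
  rw [convexRatio, ← add_smul, add_sub_cancel, one_smul, ← two_smul ℝ u, norm_smul]
  norm_num
  field_simp

theorem norm_smul_of_norm_eq_one {u : X} (hu : ‖u‖ = 1) {t : ℝ} (ht : 0 ≤ t) : ‖t • u‖ = t := by
  rw [norm_smul, hu, Real.norm_of_nonneg ht, mul_one]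

theorem convexRatio_eq_dunklWilliamsRatio {u v : X} (hu : ‖u‖ = 1) (hv : ‖v‖ = 1) {γ : ℝ}
    (hγ₀ : 0 < γ) (hγ₁ : γ < 1) :
    convexRatio u v γ = dunklWilliamsRatio (γ • u) (-((1 - γ) • v)) := by
  have hγu : ‖γ • u‖ = γ := norm_smul_of_norm_eq_one hu hγ₀.le
  have hγv : ‖-((1 - γ) • v)‖ = 1 - γ := by
    rw [norm_neg, norm_smul_of_norm_eq_one hv (by linarith)]
  have hu₀ : γ • u ≠ 0 := norm_ne_zero_iff.mp (by rw [hγu]; exact hγ₀.ne')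
  have hv₀ : -((1 - γ) • v) ≠ 0 := norm_ne_zero_iff.mp (by rw [hγv]; linarith)
  rw [dunklWilliamsRatio_eq_convexRatio hu₀ hv₀, hγu, hγv, add_sub_cancel, div_one,
    smul_smul, inv_mul_cancel₀ hγ₀.ne', one_smul, smul_neg, neg_neg, smul_smul,
    inv_mul_cancel₀ (by linarith), one_smul]

theorem exists_convexRatio_eq_dunklWilliamsRatio {x y : X} (hx : x ≠ 0) (hy : y ≠ 0)
    (hxy : x ≠ y) : ∃ u v : X, ∃ γ : ℝ, ‖u‖ = 1 ∧ ‖v‖ = 1 ∧ 0 < γ ∧ γ < 1 / 2 ∧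
      dunklWilliamsRatio x y = convexRatio u v γ := by
  have hu : ‖‖x‖⁻¹ • x‖ = 1 := norm_smul_inv_norm hx
  have hv : ‖-(‖y‖⁻¹ • y)‖ = 1 := by rw [norm_neg]; exact norm_smul_inv_norm hy
  have ha : 0 < ‖x‖ := norm_pos_iff.mpr hx
  have hb : 0 < ‖y‖ := norm_pos_iff.mpr hy
  have hγ₀ : 0 < ‖x‖ / (‖x‖ + ‖y‖) := by positivity
  have hγ₁ : ‖x‖ / (‖x‖ + ‖y‖) < 1 := by rw [div_lt_one (by positivity)]; linarith
  rw [dunklWilliamsRatio_eq_convexRatio hx hy]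
  rcases lt_trichotomy (‖x‖ / (‖x‖ + ‖y‖)) (1 / 2) with hlt | heq | hgt
  · exact ⟨_, _, _, hu, hv, hγ₀, hlt, rfl⟩
  · have hxy_norm : ‖x‖ = ‖y‖ := by field_simp at heq; linarith
    have hsum : ‖x‖⁻¹ • x + -(‖y‖⁻¹ • y) ≠ 0 := by
      rw [← hxy_norm, ← sub_eq_add_neg, ← smul_sub]
      exact smul_ne_zero (inv_ne_zero ha.ne') (sub_ne_zero.mpr hxy)
    rw [heq, convexRatio_half hsum]
    exact ⟨_, _, 1 / 4, hu, hu, by norm_num, by norm_num,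
      (convexRatio_self (norm_ne_zero_iff.mp (by rw [hu]; norm_num)) _).symm⟩
  · rw [convexRatio_comm]
    exact ⟨_, _, _, hv, hu, by linarith, by linarith, rfl⟩

theorem exists_dunklWilliamsRatio_eq_convexRatio {u v : X} (hu : ‖u‖ = 1) (hv : ‖v‖ = 1)
    {γ : ℝ} (hγ₀ : 0 < γ) (hγ : γ < 1 / 2) :
    ∃ x y : X, x ≠ 0 ∧ y ≠ 0 ∧ x ≠ y ∧ convexRatio u v γ = dunklWilliamsRatio x y := by
  have hγu : ‖γ • u‖ = γ := norm_smul_of_norm_eq_one hu hγ₀.le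
  have hγv : ‖-((1 - γ) • v)‖ = 1 - γ := by
    rw [norm_neg, norm_smul_of_norm_eq_one hv (by linarith)]
  refine ⟨γ • u, -((1 - γ) • v), ?_, ?_, ?_,
    convexRatio_eq_dunklWilliamsRatio hu hv hγ₀ (by linarith)⟩
  · exact norm_ne_zero_iff.mp (by rw [hγu]; exact hγ₀.ne')
  · exact norm_ne_zero_iff.mp (by rw [hγv]; linarith)
  · intro h
    have := congrArg norm h
    rw [hγu, hγv] at this
    linarith

end DunklWilliams

open DunklWilliams in
theorem dunkl_williams_eq_DW2_general {X : Type*} [NormedAddCommGroup X] [NormedSpace ℝ X] :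
    sSup {c : ℝ | ∃ x y : X, x ≠ 0 ∧ y ≠ 0 ∧ x ≠ y ∧
      c = (‖x‖ + ‖y‖) / ‖x - y‖ * ‖‖x‖⁻¹ • x - ‖y‖⁻¹ • y‖} =
    sSup {c : ℝ | ∃ u v : X, ∃ γ : ℝ, ‖u‖ = 1 ∧ ‖v‖ = 1 ∧ 0 < γ ∧ γ < 1/2 ∧
      c = ‖u + v‖ / ‖γ • u + (1 - γ) • v‖} := by
  congr 1
  ext c
  constructor
  · rintro ⟨x, y, hx, hy, hxy, rfl⟩
    exact exists_convexRatio_eq_dunklWilliamsRatio hx hy hxy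
  · rintro ⟨u, v, γ, hu, hv, hγ₀, hγ, rfl⟩
    exact exists_dunklWilliamsRatio_eq_convexRatio hu hv hγ₀ hγ

/-- `DW(X) = sup { ‖u+v‖ / ‖γu+(1−γ)v‖ : u, v ∈ S_X, 0 < γ < 1/2 }`. -/
theorem dunkl_williams_eq_DW2 {X : Type*} [NormedAddCommGroup X] [NormedSpace ℝ X]
    [Nontrivial X] :
    sSup {c : ℝ | ∃ x y : X, x ≠ 0 ∧ y ≠ 0 ∧ x ≠ y ∧
      c = (‖x‖ + ‖y‖) / ‖x - y‖ * ‖‖x‖⁻¹ • x - ‖y‖⁻¹ • y‖} =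
    sSup {c : ℝ | ∃ u v : X, ∃ γ : ℝ, ‖u‖ = 1 ∧ ‖v‖ = 1 ∧ 0 < γ ∧ γ < 1/2 ∧
      c = ‖u + v‖ / ‖γ • u + (1 - γ) • v‖} :=
  dunkl_williams_eq_DW2_general
end

section
/- Let X be a nontrivial real normed linear space. Then DW(X) = sup{ ‖u+v‖ / inf_{0<γ<1/2} ‖γu+(1−γ)v‖ : u, v ∈ S_X, u + v ≠ 0 }. -/
/-!
The substitution `u = x / ‖x‖`, `v = -y / ‖y‖`, `γ = ‖x‖ / (‖x‖ + ‖y‖)` turns the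
Dunkl–Williams quotient of `(x, y)` into `‖u + v‖ / ‖γ u + (1 - γ) v‖`, and `x = γ u`,
`y = -(1 - γ) v` inverts it. The quotient is symmetric in `x, y`, so we may take `γ ≤ 1/2`.
For `γ < 1/2` the value is at most `‖u + v‖ / inf_γ ‖γ u + (1 - γ) v‖`; at `γ = 1/2` it is at
most `2`, a value both sets contain (take `v = u`). Both sets are bounded, by
`‖y‖ ‖x/‖x‖ - y/‖y‖‖ ≤ 2 ‖x - y‖`.
-/

noncomputable section

namespace DunklWilliams

variable {X : Type*} [NormedAddCommGroup X] [NormedSpace ℝ X]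

def dwRatio (x y : X) : ℝ := (‖x‖ + ‖y‖) / ‖x - y‖ * ‖‖x‖⁻¹ • x - ‖y‖⁻¹ • y‖

def segmentRatio (u v : X) (γ : ℝ) : ℝ := ‖u + v‖ / ‖γ • u + (1 - γ) • v‖

def segmentInf (u v : X) : ℝ :=
  sInf {r : ℝ | ∃ γ : ℝ, 0 < γ ∧ γ < 1/2 ∧ r = ‖γ • u + (1 - γ) • v‖}

variable (X) in
def dwSet : Set ℝ := {c : ℝ | ∃ x y : X, x ≠ 0 ∧ y ≠ 0 ∧ x ≠ y ∧ c = dwRatio x y}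

variable (X) in
def dw3Set : Set ℝ :=
  {c : ℝ | ∃ u v : X, ‖u‖ = 1 ∧ ‖v‖ = 1 ∧ u + v ≠ 0 ∧ c = ‖u + v‖ / segmentInf u v}

lemma dwRatio_comm (x y : X) : dwRatio x y = dwRatio y x := by
  rw [dwRatio, dwRatio, add_comm, norm_sub_rev, norm_sub_rev (‖x‖⁻¹ • x)]

lemma norm_mul_norm_inv_smul_sub_le (x y : X) :
    ‖y‖ * ‖‖x‖⁻¹ • x - ‖y‖⁻¹ • y‖ ≤ 2 * ‖x - y‖ := by
  rcases eq_or_ne y 0 with rfl | hy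
  · simp
  rcases eq_or_ne x 0 with rfl | hx
  · rw [smul_zero, zero_sub, zero_sub, norm_neg, norm_neg, norm_smul, norm_inv, norm_norm,
      inv_mul_cancel₀ (norm_ne_zero_iff.mpr hy)]
    linarith [norm_nonneg y]
  have hx' : ‖x‖ ≠ 0 := norm_ne_zero_iff.mpr hx
  have hsplit : ‖y‖ • (‖x‖⁻¹ • x - ‖y‖⁻¹ • y) = (x - y) + ((‖y‖ - ‖x‖) / ‖x‖) • x := by
    match_scalars <;> field_simp
    ring
  have hcorr : ‖((‖y‖ - ‖x‖) / ‖x‖) • x‖ ≤ ‖x - y‖ := by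
    rw [norm_smul, Real.norm_eq_abs, abs_div, abs_norm, div_mul_cancel₀ _ hx', norm_sub_rev]
    exact abs_norm_sub_norm_le y x
  calc ‖y‖ * ‖‖x‖⁻¹ • x - ‖y‖⁻¹ • y‖ = ‖(x - y) + ((‖y‖ - ‖x‖) / ‖x‖) • x‖ := by
        rw [← hsplit, norm_smul, norm_norm]
    _ ≤ 2 * ‖x - y‖ := by linarith [norm_add_le (x - y) (((‖y‖ - ‖x‖) / ‖x‖) • x)]

lemma dwRatio_le_four (x y : X) : dwRatio x y ≤ 4 := by
  wlog h : ‖x‖ ≤ ‖y‖ generalizing x y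
  · rw [dwRatio_comm]; exact this y x (le_of_not_ge h)
  have hn := norm_mul_norm_inv_smul_sub_le x y
  rw [dwRatio, div_mul_eq_mul_div]
  refine div_le_of_le_mul₀ (norm_nonneg _) (by norm_num) ?_
  nlinarith [mul_le_mul_of_nonneg_right h (norm_nonneg (‖x‖⁻¹ • x - ‖y‖⁻¹ • y))]

lemma dwRatio_eq_segmentRatio {x y : X} (hx : x ≠ 0) (hy : y ≠ 0) :
    dwRatio x y = segmentRatio (‖x‖⁻¹ • x) (-(‖y‖⁻¹ • y)) (‖x‖ / (‖x‖ + ‖y‖)) := by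
  have hx' : 0 < ‖x‖ := norm_pos_iff.mpr hx
  have hy' : 0 < ‖y‖ := norm_pos_iff.mpr hy
  have hw : (‖x‖ / (‖x‖ + ‖y‖)) • (‖x‖⁻¹ • x) + (1 - ‖x‖ / (‖x‖ + ‖y‖)) • -(‖y‖⁻¹ • y) =
      (‖x‖ + ‖y‖)⁻¹ • (x - y) := by
    match_scalars <;> field_simp
    ring
  rw [dwRatio, segmentRatio, hw, norm_smul, norm_inv, Real.norm_of_nonneg (by positivity),
    ← sub_eq_add_neg, div_mul_eq_mul_div, div_mul_eq_div_div_swap, div_inv_eq_mul]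
  ring

lemma segmentRatio_eq_dwRatio {u v : X} (hu : ‖u‖ = 1) (hv : ‖v‖ = 1) {γ : ℝ}
    (h0 : 0 < γ) (h1 : γ < 1) : segmentRatio u v γ = dwRatio (γ • u) (-((1 - γ) • v)) := by
  have h1' : 0 < 1 - γ := sub_pos.mpr h1
  have hnu : ‖γ • u‖ = γ := by rw [norm_smul, hu, mul_one, Real.norm_of_nonneg h0.le]
  have hnv : ‖-((1 - γ) • v)‖ = 1 - γ := by
    rw [norm_neg, norm_smul, hv, mul_one, Real.norm_of_nonneg h1'.le]
  rw [dwRatio_eq_segmentRatio, hnu, hnv, add_sub_cancel, div_one, smul_smul, smul_neg, neg_neg,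
    smul_smul, inv_mul_cancel₀ h0.ne', inv_mul_cancel₀ h1'.ne', one_smul, one_smul]
  all_goals rw [← norm_pos_iff]; simp [hnu, hnv, h0, h1']

lemma one_sub_two_mul_le_norm_segment {u v : X} (hu : ‖u‖ = 1) (hv : ‖v‖ = 1) {γ : ℝ}
    (h0 : 0 ≤ γ) (h1 : γ ≤ 1) : 1 - 2 * γ ≤ ‖γ • u + (1 - γ) • v‖ := by
  have h := norm_sub_le (γ • u + (1 - γ) • v) (γ • u)
  rw [add_sub_cancel_left, norm_smul, norm_smul, hu, hv, Real.norm_of_nonneg h0,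
    Real.norm_of_nonneg (sub_nonneg.mpr h1)] at h
  linarith

lemma norm_segment_pos {u v : X} (hu : ‖u‖ = 1) (hv : ‖v‖ = 1) {γ : ℝ}
    (h0 : 0 < γ) (hγ : γ < 1/2) : 0 < ‖γ • u + (1 - γ) • v‖ := by
  linarith [one_sub_two_mul_le_norm_segment hu hv h0.le (by linarith : γ ≤ 1)]

lemma segmentRatio_mem_dwSet {u v : X} (hu : ‖u‖ = 1) (hv : ‖v‖ = 1) {γ : ℝ}
    (h0 : 0 < γ) (hγ : γ < 1/2) : segmentRatio u v γ ∈ dwSet X := by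
  have h1 : 0 < 1 - γ := by linarith
  refine ⟨γ • u, -((1 - γ) • v), ?_, ?_, ?_, segmentRatio_eq_dwRatio hu hv h0 (by linarith)⟩
  · exact smul_ne_zero h0.ne' (norm_ne_zero_iff.mp (by simp [hu]))
  · exact neg_ne_zero.mpr (smul_ne_zero h1.ne' (norm_ne_zero_iff.mp (by simp [hv])))
  · rw [← sub_ne_zero, sub_neg_eq_add, ← norm_pos_iff]
    exact norm_segment_pos hu hv h0 hγ

lemma segmentRatio_self {u : X} (hu : ‖u‖ = 1) (γ : ℝ) : segmentRatio u u γ = 2 := by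
  rw [segmentRatio, ← add_smul, add_sub_cancel, one_smul, ← two_smul ℝ, norm_smul, hu]
  norm_num

lemma segmentRatio_half_le_two (u v : X) : segmentRatio u v (1/2) ≤ 2 := by
  have h : (1/2 : ℝ) • u + (1 - 1/2 : ℝ) • v = (1/2 : ℝ) • (u + v) := by module
  rw [segmentRatio, h, norm_smul]
  refine div_le_of_le_mul₀ (by positivity) (by norm_num) (le_of_eq ?_)
  norm_num
  ring

lemma two_mem_dwSet {u : X} (hu : ‖u‖ = 1) : 2 ∈ dwSet X := by
  simpa only [segmentRatio_self hu] using
    segmentRatio_mem_dwSet hu hu (by norm_num : (0 : ℝ) < 1/4) (by norm_num)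

lemma dwSet_bddAbove : BddAbove (dwSet X) := by
  refine ⟨4, ?_⟩
  rintro _ ⟨x, y, -, -, -, rfl⟩
  exact dwRatio_le_four x y

lemma two_le_sSup_dwSet {u : X} (hu : ‖u‖ = 1) : 2 ≤ sSup (dwSet X) :=
  le_csSup dwSet_bddAbove (two_mem_dwSet hu)

lemma segmentInf_nonneg (u v : X) : 0 ≤ segmentInf u v :=
  Real.sInf_nonneg (by rintro _ ⟨γ, -, -, rfl⟩; positivity)

lemma segmentInf_le (u v : X) {γ : ℝ} (h0 : 0 < γ) (hγ : γ < 1/2) :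
    segmentInf u v ≤ ‖γ • u + (1 - γ) • v‖ :=
  csInf_le ⟨0, by rintro _ ⟨γ, -, -, rfl⟩; positivity⟩ ⟨γ, h0, hγ, rfl⟩

lemma segmentInf_self {u : X} (hu : ‖u‖ = 1) : segmentInf u u = 1 := by
  have h : {r : ℝ | ∃ γ : ℝ, 0 < γ ∧ γ < 1/2 ∧ r = ‖γ • u + (1 - γ) • u‖} = {1} := by
    ext r
    simp only [← add_smul, add_sub_cancel, one_smul, hu, Set.mem_ofPred_eq,
      Set.mem_singleton_iff]
    exact ⟨fun ⟨_, _, _, h⟩ => h, fun h => ⟨1/4, by norm_num, by norm_num, h⟩⟩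
  rw [segmentInf, h, csInf_singleton]

lemma div_sSup_dwSet_le_segmentInf {u v : X} (hu : ‖u‖ = 1) (hv : ‖v‖ = 1) :
    ‖u + v‖ / sSup (dwSet X) ≤ segmentInf u v := by
  have hM : 0 < sSup (dwSet X) := two_pos.trans_le (two_le_sSup_dwSet hu)
  refine le_csInf ⟨_, 1/4, by norm_num, by norm_num, rfl⟩ ?_
  rintro _ ⟨γ, h0, hγ, rfl⟩
  rw [div_le_comm₀ hM (norm_segment_pos hu hv h0 hγ)]
  exact le_csSup dwSet_bddAbove (segmentRatio_mem_dwSet hu hv h0 hγ)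

lemma segmentInf_pos {u v : X} (hu : ‖u‖ = 1) (hv : ‖v‖ = 1) (huv : u + v ≠ 0) :
    0 < segmentInf u v := by
  have hM : 0 < sSup (dwSet X) := two_pos.trans_le (two_le_sSup_dwSet hu)
  exact (div_pos (norm_pos_iff.mpr huv) hM).trans_le (div_sSup_dwSet_le_segmentInf hu hv)

lemma le_sSup_dwSet_of_mem_dw3Set {t : ℝ} (ht : t ∈ dw3Set X) : t ≤ sSup (dwSet X) := by
  obtain ⟨u, v, hu, hv, huv, rfl⟩ := ht
  have hM : 0 < sSup (dwSet X) := two_pos.trans_le (two_le_sSup_dwSet hu)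
  rw [div_le_comm₀ (segmentInf_pos hu hv huv) hM]
  exact div_sSup_dwSet_le_segmentInf hu hv

lemma dw3Set_bddAbove : BddAbove (dw3Set X) :=
  ⟨_, fun _ => le_sSup_dwSet_of_mem_dw3Set⟩

lemma two_mem_dw3Set {u : X} (hu : ‖u‖ = 1) : 2 ∈ dw3Set X := by
  have h2 : ‖u + u‖ = 2 := by rw [← two_smul ℝ, norm_smul, hu]; norm_num
  refine ⟨u, u, hu, hu, norm_ne_zero_iff.mp (by rw [h2]; norm_num), ?_⟩
  rw [h2, segmentInf_self hu, div_one]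

lemma segmentRatio_le_sSup_dw3Set {u v : X} (hu : ‖u‖ = 1) (hv : ‖v‖ = 1) {γ : ℝ}
    (h0 : 0 < γ) (hγ : γ ≤ 1/2) : segmentRatio u v γ ≤ sSup (dw3Set X) := by
  have h2 : 2 ≤ sSup (dw3Set X) := le_csSup dw3Set_bddAbove (two_mem_dw3Set hu)
  rcases hγ.lt_or_eq with hγ | rfl
  · rcases eq_or_ne (u + v) 0 with huv | huv
    · rw [segmentRatio, huv, norm_zero, zero_div]
      linarith
    · calc segmentRatio u v γ ≤ ‖u + v‖ / segmentInf u v :=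
            div_le_div_of_nonneg_left (norm_nonneg _) (segmentInf_pos hu hv huv)
              (segmentInf_le u v h0 hγ)
        _ ≤ sSup (dw3Set X) := le_csSup dw3Set_bddAbove ⟨u, v, hu, hv, huv, rfl⟩
  · exact (segmentRatio_half_le_two u v).trans h2

lemma le_sSup_dw3Set_of_mem_dwSet {s : ℝ} (hs : s ∈ dwSet X) : s ≤ sSup (dw3Set X) := by
  obtain ⟨x, y, hx, hy, -, rfl⟩ := hs
  wlog h : ‖x‖ ≤ ‖y‖ generalizing x y
  · rw [dwRatio_comm]
    exact this y x hy hx (le_of_not_ge h)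
  have hx' : 0 < ‖x‖ := norm_pos_iff.mpr hx
  rw [dwRatio_eq_segmentRatio hx hy]
  refine segmentRatio_le_sSup_dw3Set (norm_smul_inv_norm hx)
    (by rw [norm_neg]; exact norm_smul_inv_norm hy) (by positivity) ?_
  rw [div_le_iff₀ (by positivity)]
  linarith

end DunklWilliams

end

open DunklWilliams

theorem dunkl_williams_eq_DW3_general {X : Type*} [NormedAddCommGroup X] [NormedSpace ℝ X] :
    sSup {c : ℝ | ∃ x y : X, x ≠ 0 ∧ y ≠ 0 ∧ x ≠ y ∧
      c = (‖x‖ + ‖y‖) / ‖x - y‖ * ‖‖x‖⁻¹ • x - ‖y‖⁻¹ • y‖} =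
    sSup {c : ℝ | ∃ u v : X, ‖u‖ = 1 ∧ ‖v‖ = 1 ∧ u + v ≠ 0 ∧
      c = ‖u + v‖ /
        sInf {r : ℝ | ∃ γ : ℝ, 0 < γ ∧ γ < 1/2 ∧ r = ‖γ • u + (1 - γ) • v‖}} := by
  change sSup (dwSet X) = sSup (dw3Set X)
  have hdw3 : 0 ≤ sSup (dw3Set X) := Real.sSup_nonneg <| by
    rintro _ ⟨u, v, -, -, -, rfl⟩
    exact div_nonneg (norm_nonneg _) (segmentInf_nonneg u v)
  have hdw : 0 ≤ sSup (dwSet X) := Real.sSup_nonneg <| by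
    rintro _ ⟨x, y, -, -, -, rfl⟩
    unfold dwRatio
    positivity
  exact le_antisymm (Real.sSup_le (fun _ => le_sSup_dw3Set_of_mem_dwSet) hdw3)
    (Real.sSup_le (fun _ => le_sSup_dwSet_of_mem_dw3Set) hdw)

/-- `DW(X) = sup { ‖u+v‖ / inf_{0<γ<1/2} ‖γu+(1−γ)v‖ : u, v ∈ S_X, u+v ≠ 0 }`. -/
theorem dunkl_williams_eq_DW3 {X : Type*} [NormedAddCommGroup X] [NormedSpace ℝ X]
    [Nontrivial X] :
    sSup {c : ℝ | ∃ x y : X, x ≠ 0 ∧ y ≠ 0 ∧ x ≠ y ∧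
      c = (‖x‖ + ‖y‖) / ‖x - y‖ * ‖‖x‖⁻¹ • x - ‖y‖⁻¹ • y‖} =
    sSup {c : ℝ | ∃ u v : X, ‖u‖ = 1 ∧ ‖v‖ = 1 ∧ u + v ≠ 0 ∧
      c = ‖u + v‖ /
        sInf {r : ℝ | ∃ γ : ℝ, 0 < γ ∧ γ < 1/2 ∧ r = ‖γ • u + (1 - γ) • v‖}} :=
  dunkl_williams_eq_DW3_general
end

section
/- Let X be a nontrivial real normed linear space. Then DW(X) = sup{ 2‖u+v‖ / ‖u+v+δ(u−v)‖ : u, v ∈ S_X, 0 < δ < 1 }. -/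
/-!
The two sets of values coincide. For `‖y‖ < ‖x‖` put `u = x/‖x‖`, `v = -y/‖y‖` and
`δ = (‖x‖ - ‖y‖)/(‖x‖ + ‖y‖)`; then `u + v + δ(u - v) = 2(x - y)/(‖x‖ + ‖y‖)`, which turns the
Dunkl–Williams quotient of `x, y` into `2‖u + v‖/‖u + v + δ(u - v)‖`. Conversely `x = (1 + δ)u`,
`y = (δ - 1)v` undoes this. When `‖x‖ = ‖y‖` the quotient is `2`, the value at `u = v`.
-/

section

variable {X : Type*} [NormedAddCommGroup X] [NormedSpace ℝ X]

noncomputable def dunklWilliamsRatio (x y : X) : ℝ :=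
  (‖x‖ + ‖y‖) / ‖x - y‖ * ‖‖x‖⁻¹ • x - ‖y‖⁻¹ • y‖

noncomputable def dunklWilliamsSphereRatio (u v : X) (δ : ℝ) : ℝ :=
  2 * ‖u + v‖ / ‖u + v + δ • (u - v)‖

theorem dunklWilliamsRatio_comm (x y : X) :
    dunklWilliamsRatio x y = dunklWilliamsRatio y x := by
  rw [dunklWilliamsRatio, dunklWilliamsRatio, norm_sub_rev y, norm_sub_rev (‖y‖⁻¹ • y),
    add_comm ‖y‖]

theorem dunklWilliamsRatio_of_norm_eq {x y : X} (hxy : x ≠ y) (h : ‖x‖ = ‖y‖) :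
    dunklWilliamsRatio x y = 2 := by
  have hy : ‖y‖ ≠ 0 := by
    rintro hy
    exact hxy (by rw [norm_eq_zero.1 hy, norm_eq_zero.1 (h.trans hy)])
  have hd : ‖x - y‖ ≠ 0 := norm_ne_zero_iff.2 (sub_ne_zero.2 hxy)
  rw [dunklWilliamsRatio, h, ← smul_sub, norm_smul, norm_inv, norm_norm]
  field_simp
  ring

theorem dunklWilliamsSphereRatio_self {u : X} (hu : ‖u‖ = 1) (δ : ℝ) :
    dunklWilliamsSphereRatio u u δ = 2 := by
  have : ‖u + u‖ ≠ 0 := by rw [← two_smul ℝ, norm_smul, hu]; norm_num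
  rw [dunklWilliamsSphereRatio, sub_self, smul_zero, add_zero, mul_div_assoc, div_self this,
    mul_one]

theorem dunklWilliamsSphereRatio_eq_dunklWilliamsRatio {u v : X} (hu : ‖u‖ = 1)
    (hv : ‖v‖ = 1) {δ : ℝ} (hδ₀ : 0 < δ) (hδ₁ : δ < 1) :
    dunklWilliamsSphereRatio u v δ = dunklWilliamsRatio ((1 + δ) • u) ((δ - 1) • v) := by
  have hx : ‖(1 + δ) • u‖ = 1 + δ := by
    rw [norm_smul, hu, mul_one, Real.norm_of_nonneg (by linarith)]
  have hy : ‖(δ - 1) • v‖ = 1 - δ := by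
    rw [norm_smul, hv, mul_one, Real.norm_of_nonpos (by linarith), neg_sub]
  have hsub : (1 + δ) • u - (δ - 1) • v = u + v + δ • (u - v) := by module
  have hdir : (1 + δ)⁻¹ • (1 + δ) • u - (1 - δ)⁻¹ • (δ - 1) • v = u + v := by
    rw [smul_smul, smul_smul, inv_mul_cancel₀ (by linarith), ← neg_sub 1 δ, mul_neg,
      inv_mul_cancel₀ (by linarith)]
    module
  rw [dunklWilliamsRatio, dunklWilliamsSphereRatio, hx, hy, hsub, hdir]
  ring

theorem dunklWilliamsRatio_eq_dunklWilliamsSphereRatio_of_norm_lt {x y : X} (hy : y ≠ 0)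
    (h : ‖y‖ < ‖x‖) :
    dunklWilliamsRatio x y = dunklWilliamsSphereRatio (‖x‖⁻¹ • x) (-(‖y‖⁻¹ • y))
      ((‖x‖ - ‖y‖) / (‖x‖ + ‖y‖)) := by
  have hy' : 0 < ‖y‖ := norm_pos_iff.2 hy
  have hx' : 0 < ‖x‖ := hy'.trans h
  have hs : 0 < ‖x‖ + ‖y‖ := by positivity
  have hd : 0 < ‖x - y‖ := norm_pos_iff.2 (sub_ne_zero.2 (by rintro rfl; exact h.false))
  have hkey : ‖x‖⁻¹ • x + -(‖y‖⁻¹ • y) + ((‖x‖ - ‖y‖) / (‖x‖ + ‖y‖)) •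
      (‖x‖⁻¹ • x - -(‖y‖⁻¹ • y)) = (2 / (‖x‖ + ‖y‖)) • (x - y) := by
    match_scalars <;> field_simp <;> ring
  rw [dunklWilliamsRatio, dunklWilliamsSphereRatio, hkey, ← sub_eq_add_neg, norm_smul,
    Real.norm_of_nonneg (by positivity)]
  field_simp

theorem exists_dunklWilliamsSphereRatio_eq_dunklWilliamsRatio {x y : X} (hx : x ≠ 0) (hy : y ≠ 0)
    (hxy : x ≠ y) : ∃ u v : X, ∃ δ : ℝ, ‖u‖ = 1 ∧ ‖v‖ = 1 ∧ 0 < δ ∧ δ < 1 ∧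
      dunklWilliamsRatio x y = dunklWilliamsSphereRatio u v δ := by
  wlog hle : ‖y‖ ≤ ‖x‖ generalizing x y
  · rw [dunklWilliamsRatio_comm]
    exact this hy hx hxy.symm (le_of_not_ge hle)
  have hxn : ‖‖x‖⁻¹ • x‖ = 1 := norm_smul_inv_norm (𝕜 := ℝ) hx
  rcases hle.lt_or_eq with hlt | heq
  · refine ⟨_, _, _, hxn, by rw [norm_neg]; exact norm_smul_inv_norm (𝕜 := ℝ) hy, ?_, ?_,
      dunklWilliamsRatio_eq_dunklWilliamsSphereRatio_of_norm_lt hy hlt⟩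
    · exact div_pos (sub_pos.2 hlt) (by positivity)
    · exact (div_lt_one (by positivity)).2 (by linarith [norm_pos_iff.2 hy])
  · refine ⟨_, _, 1 / 2, hxn, hxn, by norm_num, by norm_num, ?_⟩
    rw [dunklWilliamsRatio_of_norm_eq hxy heq.symm, dunklWilliamsSphereRatio_self hxn]

theorem setOf_dunklWilliamsRatio_eq_setOf_dunklWilliamsSphereRatio :
    {c : ℝ | ∃ x y : X, x ≠ 0 ∧ y ≠ 0 ∧ x ≠ y ∧ c = dunklWilliamsRatio x y} =
    {c : ℝ | ∃ u v : X, ∃ δ : ℝ, ‖u‖ = 1 ∧ ‖v‖ = 1 ∧ 0 < δ ∧ δ < 1 ∧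
      c = dunklWilliamsSphereRatio u v δ} := by
  ext c
  constructor
  · rintro ⟨x, y, hx, hy, hxy, rfl⟩
    exact exists_dunklWilliamsSphereRatio_eq_dunklWilliamsRatio hx hy hxy
  · rintro ⟨u, v, δ, hu, hv, hδ₀, hδ₁, rfl⟩
    have hu₀ : u ≠ 0 := norm_ne_zero_iff.1 (by rw [hu]; exact one_ne_zero)
    have hv₀ : v ≠ 0 := norm_ne_zero_iff.1 (by rw [hv]; exact one_ne_zero)
    refine ⟨(1 + δ) • u, (δ - 1) • v, smul_ne_zero (by linarith) hu₀,
      smul_ne_zero (by linarith) hv₀, fun h => ?_,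
      dunklWilliamsSphereRatio_eq_dunklWilliamsRatio hu hv hδ₀ hδ₁⟩
    have := congrArg norm h
    rw [norm_smul, norm_smul, hu, hv, Real.norm_of_nonneg (by linarith),
      Real.norm_of_nonpos (by linarith)] at this
    linarith

end

theorem dunkl_williams_eq_DW4_general {X : Type*} [NormedAddCommGroup X] [NormedSpace ℝ X] :
    sSup {c : ℝ | ∃ x y : X, x ≠ 0 ∧ y ≠ 0 ∧ x ≠ y ∧
      c = (‖x‖ + ‖y‖) / ‖x - y‖ * ‖‖x‖⁻¹ • x - ‖y‖⁻¹ • y‖} =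
    sSup {c : ℝ | ∃ u v : X, ∃ δ : ℝ, ‖u‖ = 1 ∧ ‖v‖ = 1 ∧ 0 < δ ∧ δ < 1 ∧
      c = 2 * ‖u + v‖ / ‖u + v + δ • (u - v)‖} :=
  congrArg sSup setOf_dunklWilliamsRatio_eq_setOf_dunklWilliamsSphereRatio

/-- `DW(X) = sup { 2‖u+v‖ / ‖u+v+δ(u−v)‖ : u, v ∈ S_X, 0 < δ < 1 }`. -/
theorem dunkl_williams_eq_DW4 {X : Type*} [NormedAddCommGroup X] [NormedSpace ℝ X]
    [Nontrivial X] :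
    sSup {c : ℝ | ∃ x y : X, x ≠ 0 ∧ y ≠ 0 ∧ x ≠ y ∧
      c = (‖x‖ + ‖y‖) / ‖x - y‖ * ‖‖x‖⁻¹ • x - ‖y‖⁻¹ • y‖} =
    sSup {c : ℝ | ∃ u v : X, ∃ δ : ℝ, ‖u‖ = 1 ∧ ‖v‖ = 1 ∧ 0 < δ ∧ δ < 1 ∧
      c = 2 * ‖u + v‖ / ‖u + v + δ • (u - v)‖} :=
  dunkl_williams_eq_DW4_general
end

section
/- Let X be a real normed linear space. Then DW_B(X) = sup{ (1+t)‖u+v‖ / ‖u+tv‖ : u, v ∈ S_X, u ⊥_B v, t > 0 }. -/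
/-!
The substitution `u = x / ‖x‖`, `v = -y / ‖y‖`, `t = ‖y‖ / ‖x‖`, with inverse `x = u`, `y = -t v`,
matches the two index sets. It preserves Birkhoff orthogonality, which is invariant under scaling
either vector, and it carries one quotient to the other because `u + t v = (x - y) / ‖x‖`.
-/

def BirkhoffOrthogonal {E : Type*} [NormedAddCommGroup E] [Module ℝ E] (x y : E) : Prop :=
  ∀ l : ℝ, ‖x‖ ≤ ‖x + l • y‖

namespace BirkhoffOrthogonal

variable {E : Type*} [NormedAddCommGroup E] [NormedSpace ℝ E] {x y : E}

theorem smul_right (h : BirkhoffOrthogonal x y) (b : ℝ) : BirkhoffOrthogonal x (b • y) := by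
  intro l
  rw [smul_smul]
  exact h (l * b)

theorem smul_left (h : BirkhoffOrthogonal x y) (a : ℝ) : BirkhoffOrthogonal (a • x) y := by
  intro l
  rcases eq_or_ne a 0 with rfl | ha
  · simp
  have hfactor : a • x + l • y = a • (x + (l / a) • y) := by
    rw [smul_add, smul_smul, mul_div_cancel₀ l ha]
  rw [hfactor, norm_smul, norm_smul]
  exact mul_le_mul_of_nonneg_left (h _) (norm_nonneg a)

end BirkhoffOrthogonal

section Quotients

variable {E : Type*} [NormedAddCommGroup E] [NormedSpace ℝ E]

theorem dunklWilliams_quotient_eq_normalized {x y : E} (hx : x ≠ 0) (hy : y ≠ 0) :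
    (‖x‖ + ‖y‖) / ‖x - y‖ * ‖‖x‖⁻¹ • x - ‖y‖⁻¹ • y‖ =
      (1 + ‖y‖ / ‖x‖) * ‖‖x‖⁻¹ • x + -(‖y‖⁻¹ • y)‖ /
        ‖‖x‖⁻¹ • x + (‖y‖ / ‖x‖) • -(‖y‖⁻¹ • y)‖ := by
  have hxn : ‖x‖ ≠ 0 := norm_ne_zero_iff.2 hx
  have hyn : ‖y‖ ≠ 0 := norm_ne_zero_iff.2 hy
  have hshift : ‖x‖⁻¹ • x + (‖y‖ / ‖x‖) • -(‖y‖⁻¹ • y) = ‖x‖⁻¹ • (x - y) := by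
    match_scalars <;> field_simp
  rw [hshift, ← sub_eq_add_neg, norm_smul, norm_inv, norm_norm]
  field_simp

theorem dunklWilliams_quotient_unit_neg_smul {u v : E} (hu : ‖u‖ = 1) (hv : ‖v‖ = 1) {t : ℝ}
    (ht : 0 < t) :
    (‖u‖ + ‖(-t) • v‖) / ‖u - (-t) • v‖ * ‖‖u‖⁻¹ • u - ‖(-t) • v‖⁻¹ • (-t) • v‖ =
      (1 + t) * ‖u + v‖ / ‖u + t • v‖ := by
  have hnorm : ‖(-t) • v‖ = t := by
    rw [norm_smul, hv, Real.norm_eq_abs, abs_neg, abs_of_pos ht, mul_one]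
  rw [hu, hnorm, inv_one, one_smul, smul_smul, mul_neg, inv_mul_cancel₀ ht.ne', neg_one_smul,
    sub_neg_eq_add, neg_smul, sub_neg_eq_add]
  ring

end Quotients

/-- `DW_B(X) = sup { (1+t)‖u+v‖ / ‖u+tv‖ : u, v ∈ S_X, u ⊥_B v, t > 0 }`,
where `x ⊥_B y` means `‖x + λy‖ ≥ ‖x‖` for all real `λ`. -/
theorem dunkl_williams_birkhoff_eq_DWB5 {X : Type*} [NormedAddCommGroup X]
    [NormedSpace ℝ X] :
    sSup {c : ℝ | ∃ x y : X, x ≠ 0 ∧ y ≠ 0 ∧ (∀ l : ℝ, ‖x‖ ≤ ‖x + l • y‖) ∧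
      c = (‖x‖ + ‖y‖) / ‖x - y‖ * ‖‖x‖⁻¹ • x - ‖y‖⁻¹ • y‖} =
    sSup {c : ℝ | ∃ u v : X, ∃ t : ℝ, ‖u‖ = 1 ∧ ‖v‖ = 1 ∧
      (∀ l : ℝ, ‖u‖ ≤ ‖u + l • v‖) ∧ 0 < t ∧
      c = (1 + t) * ‖u + v‖ / ‖u + t • v‖} := by
  congr 1
  ext c
  constructor
  · rintro ⟨x, y, hx, hy, horth, rfl⟩
    have horth' : BirkhoffOrthogonal (‖x‖⁻¹ • x) (-(‖y‖⁻¹ • y)) := by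
      rw [← neg_smul]
      exact (BirkhoffOrthogonal.smul_left horth _).smul_right _
    exact ⟨‖x‖⁻¹ • x, -(‖y‖⁻¹ • y), ‖y‖ / ‖x‖, norm_smul_inv_norm hx,
      (norm_neg _).trans (norm_smul_inv_norm hy), horth', by positivity,
      dunklWilliams_quotient_eq_normalized hx hy⟩
  · rintro ⟨u, v, t, hu, hv, horth, ht, rfl⟩
    have hu0 : u ≠ 0 := norm_ne_zero_iff.1 (by rw [hu]; exact one_ne_zero)
    have hv0 : v ≠ 0 := norm_ne_zero_iff.1 (by rw [hv]; exact one_ne_zero)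
    exact ⟨u, (-t) • v, hu0, smul_ne_zero (neg_ne_zero.2 ht.ne') hv0,
      BirkhoffOrthogonal.smul_right horth _, (dunklWilliams_quotient_unit_neg_smul hu hv ht).symm⟩
end

section
/- Let X be a real normed linear space, let u, v, x ∈ S_X, ρ ∈ ℝ with ρ ≠ 0, and μ ∈ ℝ be such that x ⊥_B (v − u) and ρx = μu + (1−μ)v. Then |ρ| ≤ ‖γu + (1−γ)v‖ for every γ ∈ ℝ; in particular |ρ| ≤ inf_{0<γ<1/2} ‖γu + (1−γ)v‖. -/
/-!
Birkhoff orthogonality is homogeneous in its first argument, so `ρ • x ⊥_B (v - u)`.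
Every point `γ • u + (1 - γ) • v` of the line through `u` and `v` is `ρ • x` shifted by a
multiple of `v - u`, hence its norm is at least `‖ρ • x‖ = |ρ|`.
-/

theorem norm_smul_le_norm_smul_add_smul_of_birkhoff {X : Type*} [NormedAddCommGroup X]
    [NormedSpace ℝ X] {x w : X} (horth : ∀ l : ℝ, ‖x‖ ≤ ‖x + l • w‖) (c l : ℝ) :
    ‖c • x‖ ≤ ‖c • x + l • w‖ := by
  rcases eq_or_ne c 0 with rfl | hc
  · simp
  have hrescale : c • x + l • w = c • (x + (l / c) • w) := by
    rw [smul_add, smul_smul, mul_div_cancel₀ _ hc]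
  rw [hrescale, norm_smul, norm_smul]
  exact mul_le_mul_of_nonneg_left (horth _) (norm_nonneg c)

theorem abs_le_segment_norm_of_birkhoff_general {X : Type*} [NormedAddCommGroup X]
    [NormedSpace ℝ X] (u v x : X) (ρ μ : ℝ)
    (hx : ‖x‖ = 1)
    (horth : ∀ l : ℝ, ‖x‖ ≤ ‖x + l • (v - u)‖)
    (heq : ρ • x = μ • u + (1 - μ) • v) :
    (∀ γ : ℝ, |ρ| ≤ ‖γ • u + (1 - γ) • v‖) ∧
    |ρ| ≤ sInf {r : ℝ | ∃ γ : ℝ, 0 < γ ∧ γ < 1/2 ∧ r = ‖γ • u + (1 - γ) • v‖} := by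
  have hline : ∀ γ : ℝ, |ρ| ≤ ‖γ • u + (1 - γ) • v‖ := by
    intro γ
    have hshift : γ • u + (1 - γ) • v = ρ • x + (μ - γ) • (v - u) := by
      rw [heq]
      module
    calc |ρ| = ‖ρ • x‖ := by rw [norm_smul, hx, mul_one, Real.norm_eq_abs]
      _ ≤ ‖γ • u + (1 - γ) • v‖ :=
        hshift ▸ norm_smul_le_norm_smul_add_smul_of_birkhoff horth ρ (μ - γ)
  refine ⟨hline, le_csInf ⟨_, 1/4, by norm_num, by norm_num, rfl⟩ ?_⟩
  rintro r ⟨γ, -, -, rfl⟩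
  exact hline γ

/-- If `u, v, x ∈ S_X`, `ρ ≠ 0`, `x ⊥_B (v − u)` and `ρx = μu + (1−μ)v`, then
`|ρ| ≤ ‖γu + (1−γ)v‖` for every real `γ`; in particular
`|ρ| ≤ inf_{0<γ<1/2} ‖γu + (1−γ)v‖`. -/
theorem abs_le_segment_norm_of_birkhoff {X : Type*} [NormedAddCommGroup X]
    [NormedSpace ℝ X] (u v x : X) (ρ μ : ℝ)
    (hu : ‖u‖ = 1) (hv : ‖v‖ = 1) (hx : ‖x‖ = 1) (hρ : ρ ≠ 0)
    (horth : ∀ l : ℝ, ‖x‖ ≤ ‖x + l • (v - u)‖)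
    (heq : ρ • x = μ • u + (1 - μ) • v) :
    (∀ γ : ℝ, |ρ| ≤ ‖γ • u + (1 - γ) • v‖) ∧
    |ρ| ≤ sInf {r : ℝ | ∃ γ : ℝ, 0 < γ ∧ γ < 1/2 ∧ r = ‖γ • u + (1 - γ) • v‖} :=
  abs_le_segment_norm_of_birkhoff_general u v x ρ μ hx horth heq
end

section
/- Define N : ℝ² → ℝ by N(x₁,x₂) = √(x₁² + x₂²) if x₁x₂ ≥ 0 and N(x₁,x₂) = |x₁| + |x₂| if x₁x₂ ≤ 0 (the ℓ₂–ℓ₁ norm). Then sup{ (1+t)·N(u−v)/N(u−tv) : u, v ∈ ℝ², N(u) = N(v) = 1, 0 < t < 1 } = 2√2. -/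
/-!
The norm is Euclidean on the closed quadrants where `x₁ x₂ ≥ 0` and equals `|x₂ - x₁|` on the
others; it lies between the Euclidean norm and `√2` times it, and above `|x₂ - x₁|`. For the upper
bound, if `u` lies on a Euclidean arc, the Euclidean Dunkl–Williams inequality (constant `2`, valid
in every inner product space) loses only the comparison factor `√2`. If `u` and `u - v` both lie in
the `ℓ₁` quadrants, the same inequality in `ℝ`, applied to `x₂ - x₁`, gives `2`. In the remaining
case a sum-of-squares identity bounds `(1 + t)‖u - v‖` by `2√2 ‖u - t v‖` in the Euclidean norm.
The bound is approached by `u = (t - 1, t)`, `v = (0, 1)`, where the ratio is `√2 (1 + t)`.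
-/

/-- The `ℓ₂–ℓ₁` norm on `ℝ²`. -/
noncomputable def l2l1Norm (x : ℝ × ℝ) : ℝ :=
  if 0 ≤ x.1 * x.2 then Real.sqrt (x.1 ^ 2 + x.2 ^ 2) else |x.1| + |x.2|

open WithLp

theorem one_add_mul_norm_sub_le_two_mul_norm_sub_smul {E : Type*} [NormedAddCommGroup E]
    [InnerProductSpace ℝ E] {u v : E} {t : ℝ} (hu : ‖u‖ = 1) (hv : ‖v‖ ≤ 1) (ht : |t| ≤ 1) :
    (1 + t) * ‖u - v‖ ≤ 2 * ‖u - t • v‖ := by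
  have key : (2 * ‖u - t • v‖) ^ 2 - ((1 + t) * ‖u - v‖) ^ 2 =
      (1 - t) ^ 2 * ‖u + v‖ ^ 2 + 2 * (1 - t ^ 2) * (1 - ‖v‖ ^ 2) := by
    rw [mul_pow, mul_pow, norm_sub_sq_real, norm_sub_sq_real, norm_add_sq_real, norm_smul,
      inner_smul_right, hu, Real.norm_eq_abs, mul_pow, sq_abs]
    ring
  have ht2 : t ^ 2 ≤ 1 := by rwa [sq_le_one_iff_abs_le_one]
  have hv2 : ‖v‖ ^ 2 ≤ 1 := pow_le_one₀ (norm_nonneg v) hv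
  refine le_of_sq_le_sq ?_ (by positivity)
  nlinarith [mul_nonneg (sq_nonneg (1 - t)) (sq_nonneg ‖u + v‖),
    mul_nonneg (sub_nonneg.2 ht2) (sub_nonneg.2 hv2)]

theorem norm_toLp_sq (x : ℝ × ℝ) : ‖toLp 2 x‖ ^ 2 = x.1 ^ 2 + x.2 ^ 2 := by
  simp [prod_norm_sq_eq_of_L2]

theorem l2l1Norm_of_mul_nonneg {x : ℝ × ℝ} (h : 0 ≤ x.1 * x.2) : l2l1Norm x = ‖toLp 2 x‖ := by
  simp [l2l1Norm, h, prod_norm_eq_of_L2]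

theorem l2l1Norm_of_mul_neg {x : ℝ × ℝ} (h : x.1 * x.2 < 0) : l2l1Norm x = |x.2 - x.1| := by
  rw [l2l1Norm, if_neg h.not_ge]
  rcases mul_neg_iff.1 h with ⟨h1, h2⟩ | ⟨h1, h2⟩
  · rw [abs_of_pos h1, abs_of_neg h2, abs_of_neg (by linarith)]; ring
  · rw [abs_of_neg h1, abs_of_pos h2, abs_of_pos (by linarith)]; ring

theorem norm_toLp_le_l2l1Norm (x : ℝ × ℝ) : ‖toLp 2 x‖ ≤ l2l1Norm x := by
  rcases le_or_gt 0 (x.1 * x.2) with h | h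
  · exact (l2l1Norm_of_mul_nonneg h).ge
  · rw [l2l1Norm_of_mul_neg h]
    exact le_of_sq_le_sq (by rw [norm_toLp_sq, sq_abs]; nlinarith) (abs_nonneg _)

theorem abs_snd_sub_fst_le_l2l1Norm (x : ℝ × ℝ) : |x.2 - x.1| ≤ l2l1Norm x := by
  rcases le_or_gt 0 (x.1 * x.2) with h | h
  · rw [l2l1Norm_of_mul_nonneg h]
    exact le_of_sq_le_sq (by rw [norm_toLp_sq, sq_abs]; nlinarith) (norm_nonneg _)
  · exact (l2l1Norm_of_mul_neg h).ge

theorem l2l1Norm_le_sqrt_two_mul_norm_toLp (x : ℝ × ℝ) : l2l1Norm x ≤ √2 * ‖toLp 2 x‖ := by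
  rcases le_or_gt 0 (x.1 * x.2) with h | h
  · rw [l2l1Norm_of_mul_nonneg h]
    exact le_mul_of_one_le_left (norm_nonneg _) Real.one_lt_sqrt_two.le
  · rw [l2l1Norm_of_mul_neg h]
    refine le_of_sq_le_sq ?_ (by positivity)
    rw [mul_pow, Real.sq_sqrt zero_le_two, norm_toLp_sq, sq_abs]
    nlinarith [sq_nonneg (x.1 + x.2)]

theorem l2l1Norm_nonneg (x : ℝ × ℝ) : 0 ≤ l2l1Norm x :=
  (norm_nonneg _).trans (norm_toLp_le_l2l1Norm x)

theorem one_add_sq_mul_le_eight_mul_of_abs_sub_eq_one {a b c e t : ℝ} (hab : |b - a| = 1)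
    (hce : c ^ 2 + e ^ 2 ≤ 1) (hd : |e - c| ≤ 1) (ht : |t| ≤ 1) :
    (1 + t) ^ 2 * ((a - c) ^ 2 + (b - e) ^ 2) ≤ 8 * ((a - t * c) ^ 2 + (b - t * e) ^ 2) := by
  wlog hab' : b - a = 1 generalizing a b c e with H
  · have hba : b - a = -1 := (abs_eq zero_le_one |>.1 hab).resolve_left hab'
    have := H (a := -a) (b := -b) (c := -c) (e := -e) (by rw [← hab, ← abs_neg]; ring_nf)
      (by linarith) (by rw [← abs_neg]; ring_nf; linarith) (by linarith)
    linear_combination this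
  obtain rfl : b = a + 1 := by linarith
  obtain ⟨hd₁, hd₂⟩ := abs_le.1 hd
  obtain ⟨ht₁, ht₂⟩ := abs_le.1 ht
  set K := 8 - (1 + t) ^ 2
  set m := t ^ 2 - 6 * t + 1
  set P := 2 * (1 + (e - c)) * (1 - t) ^ 2 + (1 - (e - c)) * (1 + t) ^ 2
  -- complete the square in `2 a + 1`; what remains, up to a multiple of `1 - c² - e²`,
  -- is a quadratic in `e - c` that factors as `P (P + 8 (1 - t²))`
  have key : 2 * K * (8 * ((a - t * c) ^ 2 + (a + 1 - t * e) ^ 2)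
      - (1 + t) ^ 2 * ((a - c) ^ 2 + (a + 1 - e) ^ 2)) =
      (K * (2 * a + 1) + m * (c + e)) ^ 2 + P * (P + 8 * (1 - t ^ 2))
        + 16 * (1 - t ^ 2) ^ 2 * (1 - c ^ 2 - e ^ 2) := by
    simp only [K, m, P]; ring
  have hK : 0 < 2 * K := by nlinarith
  have hP : 0 ≤ P := add_nonneg (mul_nonneg (by linarith) (sq_nonneg _))
    (mul_nonneg (by linarith) (sq_nonneg _))
  have hP' : 0 ≤ P + 8 * (1 - t ^ 2) := by nlinarith
  have hv : 0 ≤ (1 - t ^ 2) ^ 2 * (1 - c ^ 2 - e ^ 2) := mul_nonneg (sq_nonneg _) (by linarith)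
  refine sub_nonneg.1 ((mul_nonneg_iff_of_pos_left hK).1 ?_)
  rw [key]
  linarith [sq_nonneg (K * (2 * a + 1) + m * (c + e)), mul_nonneg hP hP', hv]

theorem one_add_mul_norm_toLp_sub_le {u v : ℝ × ℝ} {t : ℝ} (hu : |u.2 - u.1| = 1)
    (hv : ‖toLp 2 v‖ ≤ 1) (hv' : |v.2 - v.1| ≤ 1) (ht : |t| ≤ 1) :
    (1 + t) * ‖toLp 2 (u - v)‖ ≤ 2 * √2 * ‖toLp 2 (u - t • v)‖ := by
  have hv₂ : v.1 ^ 2 + v.2 ^ 2 ≤ 1 := by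
    rw [← norm_toLp_sq]; exact pow_le_one₀ (norm_nonneg _) hv
  refine le_of_sq_le_sq ?_ (by positivity)
  rw [mul_pow, mul_pow, mul_pow, Real.sq_sqrt zero_le_two, norm_toLp_sq, norm_toLp_sq]
  simp only [Prod.fst_sub, Prod.snd_sub, Prod.smul_fst, Prod.smul_snd, smul_eq_mul]
  linarith [one_add_sq_mul_le_eight_mul_of_abs_sub_eq_one hu hv₂ hv' ht]

theorem one_add_mul_l2l1Norm_sub_le_of_norm_toLp_eq_one {u v : ℝ × ℝ} {t : ℝ}
    (hu : ‖toLp 2 u‖ = 1) (hv : ‖toLp 2 v‖ ≤ 1) (ht : |t| ≤ 1) :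
    (1 + t) * l2l1Norm (u - v) ≤ 2 * √2 * l2l1Norm (u - t • v) := by
  have ht' : 0 ≤ 1 + t := by linarith [neg_abs_le t]
  calc (1 + t) * l2l1Norm (u - v) ≤ (1 + t) * (√2 * ‖toLp 2 (u - v)‖) := by
        gcongr; exact l2l1Norm_le_sqrt_two_mul_norm_toLp _
    _ = √2 * ((1 + t) * ‖toLp 2 u - toLp 2 v‖) := by rw [toLp_sub]; ring
    _ ≤ √2 * (2 * ‖toLp 2 u - t • toLp 2 v‖) := mul_le_mul_of_nonneg_left
        (one_add_mul_norm_sub_le_two_mul_norm_sub_smul hu hv ht) (Real.sqrt_nonneg 2)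
    _ = 2 * √2 * ‖toLp 2 (u - t • v)‖ := by rw [toLp_sub, toLp_smul]; ring
    _ ≤ 2 * √2 * l2l1Norm (u - t • v) := by gcongr; exact norm_toLp_le_l2l1Norm _

theorem one_add_mul_l2l1Norm_sub_le_of_mul_neg {u v : ℝ × ℝ} {t : ℝ} (hu : |u.2 - u.1| = 1)
    (hv : |v.2 - v.1| ≤ 1) (hw : (u - v).1 * (u - v).2 < 0) (ht : |t| ≤ 1) :
    (1 + t) * l2l1Norm (u - v) ≤ 2 * l2l1Norm (u - t • v) := by
  have h := one_add_mul_norm_sub_le_two_mul_norm_sub_smul (E := ℝ) (u := u.2 - u.1)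
    (v := v.2 - v.1) (by rwa [Real.norm_eq_abs]) (by rwa [Real.norm_eq_abs]) ht
  calc (1 + t) * l2l1Norm (u - v) = (1 + t) * ‖(u.2 - u.1) - (v.2 - v.1)‖ := by
        rw [l2l1Norm_of_mul_neg hw, Real.norm_eq_abs, Prod.fst_sub, Prod.snd_sub]
        ring_nf
    _ ≤ 2 * ‖(u.2 - u.1) - t • (v.2 - v.1)‖ := h
    _ = 2 * |(u - t • v).2 - (u - t • v).1| := by
        rw [Real.norm_eq_abs, Prod.fst_sub, Prod.snd_sub, Prod.smul_fst, Prod.smul_snd,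
          smul_eq_mul, smul_eq_mul]
        ring_nf
    _ ≤ 2 * l2l1Norm (u - t • v) := by gcongr; exact abs_snd_sub_fst_le_l2l1Norm _

theorem one_add_mul_l2l1Norm_sub_le {u v : ℝ × ℝ} {t : ℝ} (hu : l2l1Norm u = 1)
    (hv : l2l1Norm v = 1) (ht : |t| ≤ 1) :
    (1 + t) * l2l1Norm (u - v) ≤ 2 * √2 * l2l1Norm (u - t • v) := by
  have hv₂ : ‖toLp 2 v‖ ≤ 1 := hv ▸ norm_toLp_le_l2l1Norm v
  have hv₁ : |v.2 - v.1| ≤ 1 := hv ▸ abs_snd_sub_fst_le_l2l1Norm v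
  rcases le_or_gt 0 (u.1 * u.2) with hu₀ | hu₀
  · exact one_add_mul_l2l1Norm_sub_le_of_norm_toLp_eq_one
      (by rw [← l2l1Norm_of_mul_nonneg hu₀, hu]) hv₂ ht
  have hu₁ : |u.2 - u.1| = 1 := by rw [← l2l1Norm_of_mul_neg hu₀, hu]
  rcases le_or_gt 0 ((u - v).1 * (u - v).2) with hw | hw
  · rw [l2l1Norm_of_mul_nonneg hw]
    exact (one_add_mul_norm_toLp_sub_le hu₁ hv₂ hv₁ ht).trans
      (by gcongr; exact norm_toLp_le_l2l1Norm _)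
  · refine (one_add_mul_l2l1Norm_sub_le_of_mul_neg hu₁ hv₁ hw ht).trans ?_
    have := l2l1Norm_nonneg (u - t • v)
    nlinarith [Real.one_lt_sqrt_two]

theorem l2l1Norm_sub_one_self {t : ℝ} (ht₀ : 0 < t) (ht₁ : t < 1) : l2l1Norm (t - 1, t) = 1 := by
  rw [l2l1Norm_of_mul_neg (mul_neg_of_neg_of_pos (by linarith) ht₀)]
  norm_num

theorem l2l1Norm_zero_one : l2l1Norm (0, 1) = 1 := by
  norm_num [l2l1Norm]

theorem l2l1Norm_mk_self (a : ℝ) : l2l1Norm (a, a) = √2 * |a| := by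
  rw [l2l1Norm, if_pos (mul_self_nonneg a), ← two_mul, Real.sqrt_mul zero_le_two,
    Real.sqrt_sq_eq_abs]

theorem l2l1Norm_mk_zero (a : ℝ) : l2l1Norm (a, 0) = |a| := by
  simp [l2l1Norm, Real.sqrt_sq_eq_abs]

theorem l2l1Norm_ratio_sub_one_self {t : ℝ} (ht : t < 1) :
    (1 + t) * l2l1Norm ((t - 1, t) - (0, 1)) / l2l1Norm ((t - 1, t) - t • (0, 1)) =
      √2 * (1 + t) := by
  have h : |t - 1| ≠ 0 := abs_ne_zero.2 (by linarith)
  rw [Prod.mk_sub_mk, Prod.smul_mk, Prod.mk_sub_mk, smul_eq_mul, smul_eq_mul, mul_zero, sub_zero,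
    mul_one, sub_self, l2l1Norm_mk_self, l2l1Norm_mk_zero]
  field_simp

/-- The Dunkl–Williams constant of the `ℓ₂–ℓ₁` plane equals `2√2`. -/
theorem dunkl_williams_l2l1 :
    sSup {c : ℝ | ∃ u v : ℝ × ℝ, ∃ t : ℝ, l2l1Norm u = 1 ∧ l2l1Norm v = 1 ∧
      0 < t ∧ t < 1 ∧ c = (1 + t) * l2l1Norm (u - v) / l2l1Norm (u - t • v)} =
    2 * Real.sqrt 2 := by
  have hs : 0 < √2 := by positivity
  have hmem : ∀ c ∈ Set.Ioo (√2) (2 * √2), ∃ u v : ℝ × ℝ, ∃ t : ℝ, l2l1Norm u = 1 ∧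
      l2l1Norm v = 1 ∧ 0 < t ∧ t < 1 ∧ c = (1 + t) * l2l1Norm (u - v) / l2l1Norm (u - t • v) := by
    rintro c ⟨hc₁, hc₂⟩
    obtain ⟨t, rfl⟩ : ∃ t, c = √2 * (1 + t) := ⟨c / √2 - 1, by field_simp; ring⟩
    have ht₀ : 0 < t := by nlinarith
    have ht₁ : t < 1 := by nlinarith
    exact ⟨_, _, t, l2l1Norm_sub_one_self ht₀ ht₁, l2l1Norm_zero_one, ht₀, ht₁,
      (l2l1Norm_ratio_sub_one_self ht₁).symm⟩
  refine csSup_eq_of_forall_le_of_forall_lt_exists_gt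
    ⟨_, hmem (3 / 2 * √2) ⟨by linarith, by linarith⟩⟩ ?_ fun w hw => ?_
  · rintro c ⟨u, v, t, hu, hv, ht₀, ht₁, rfl⟩
    exact div_le_of_le_mul₀ (l2l1Norm_nonneg _) (by positivity)
      (one_add_mul_l2l1Norm_sub_le hu hv (abs_le.2 ⟨by linarith, ht₁.le⟩))
  · obtain ⟨c, hwc, hc⟩ := exists_between (max_lt hw (by linarith) : max w √2 < 2 * √2)
    exact ⟨c, hmem c ⟨(le_max_right _ _).trans_lt hwc, hc⟩, (le_max_left _ _).trans_lt hwc⟩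
end

section
/- Define N : ℝ² → ℝ by N(x₁,x₂) = √(x₁² + x₂²) if x₁x₂ ≥ 0 and N(x₁,x₂) = |x₁| + |x₂| if x₁x₂ ≤ 0 (the ℓ₂–ℓ₁ norm). Then for all u, v ∈ ℝ² with N(u) = N(v) = 1 and all t ∈ (0,1), one has (1+t)·N(u−v)/N(u−tv) < 2√2; that is, the supremum defining the Dunkl–Williams constant of (ℝ², N) is not attained. -/
lemma abs_pair_sq (x y : ℝ) (h : x*y ≤ 0) : (|x| + |y|)^2 = x^2+y^2-2*(x*y) := by
  have h1 : |x| * |y| = -(x*y) := by rw [← abs_mul, abs_of_nonpos h]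
  nlinarith [sq_abs x, sq_abs y]

lemma l2l1_eq (x y : ℝ) : l2l1Norm (x,y) = Real.sqrt (x^2+y^2 - 2*min (x*y) 0) := by
  unfold l2l1Norm
  dsimp only
  split_ifs with h
  · rw [min_eq_right h, mul_zero, sub_zero]
  · push_neg at h
    rw [min_eq_left h.le,
      show x^2+y^2-2*(x*y) = (|x| + |y|)^2 from (abs_pair_sq x y h.le).symm,
      Real.sqrt_sq (by positivity)]

lemma arg_nonneg (x y : ℝ) : 0 ≤ x^2+y^2-2*min (x*y) 0 := by
  rcases min_cases (x*y) 0 with ⟨h1,h2⟩|⟨h1,h2⟩ <;> rw [h1] <;>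
    nlinarith [sq_nonneg (x-y), sq_nonneg x, sq_nonneg y]

lemma lt_2sqrt2 {x y : ℝ} (hy : 0 ≤ y) (h : x^2 < 8*y^2) : x < 2*Real.sqrt 2*y := by
  have hs : Real.sqrt 2 ^ 2 = 2 := Real.sq_sqrt (by norm_num)
  have hy' : 0 ≤ 2*Real.sqrt 2*y := by positivity
  have h2 : x^2 < (2*Real.sqrt 2*y)^2 := by nlinarith
  exact lt_of_pow_lt_pow_left₀ 2 hy' h2

lemma l2l1_pos (x y : ℝ) (h : ¬(x = 0 ∧ y = 0)) : 0 < l2l1Norm (x,y) := by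
  rw [l2l1_eq]
  apply Real.sqrt_pos.2
  rcases min_cases (x*y) 0 with ⟨h1,h2⟩|⟨h1,h2⟩ <;> rw [h1]
  · rcases eq_or_ne x y with rfl|hne
    · have hx : x = 0 := by nlinarith
      exact absurd ⟨hx, hx⟩ h
    · rcases lt_or_gt_of_ne (sub_ne_zero.2 hne) with h4|h4 <;> nlinarith
  · rcases not_and_or.1 h with hx|hx
    · rcases lt_or_gt_of_ne hx with h4|h4 <;> nlinarith
    · rcases lt_or_gt_of_ne hx with h4|h4 <;> nlinarith

lemma l2l1_smul (r x y : ℝ) (hr : 0 ≤ r) : l2l1Norm (r*x, r*y) = r * l2l1Norm (x,y) := by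
  rw [l2l1_eq, l2l1_eq]
  have hm : min ((r*x)*(r*y)) 0 = r^2 * min (x*y) 0 := by
    rcases min_cases (x*y) 0 with ⟨h1,h2⟩|⟨h1,h2⟩ <;> rw [h1]
    · rw [min_eq_left (by nlinarith [sq_nonneg r] : (r*x)*(r*y) ≤ 0)]; ring
    · rw [min_eq_right (by nlinarith [sq_nonneg r] : (0:ℝ) ≤ (r*x)*(r*y))]; ring
  rw [hm, show (r*x)^2+(r*y)^2 - 2*(r^2*min (x*y) 0) = r^2*(x^2+y^2-2*min (x*y) 0) by ring,
    Real.sqrt_mul (sq_nonneg r), Real.sqrt_sq hr]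


section
variable (a b c d t : ℝ)

lemma caseI_I (ht0 : 0 < t) (ht1 : t < 1)
    (ha : 0 ≤ a) (hb : 0 ≤ b) (hu : a^2+b^2 = 1)
    (hc : 0 ≤ c) (hd : 0 ≤ d) (hv : c^2+d^2 = 1) :
    (1+t)^2*((a-c)^2+(b-d)^2 - 2*min ((a-c)*(b-d)) 0)
      < 8*((a-t*c)^2+(b-t*d)^2 - 2*min ((a-t*c)*(b-t*d)) 0) := by
  have hT2 : 2 ≤ (a+c)^2+(b+d)^2 := by nlinarith [mul_nonneg ha hc, mul_nonneg hb hd]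
  have hF2 : (0:ℝ) < (1-t)^2 := pow_pos (by linarith) 2
  have hFc : 0 ≤ (1-t)^2*((a+c)^2+(b+d)^2 - 2) := mul_nonneg (sq_nonneg _) (by linarith)
  have hFS : 0 ≤ (1+t)^2*((a-c)+(b-d))^2 := mul_nonneg (sq_nonneg _) (sq_nonneg _)
  have hFE : 0 ≤ (1+t)^2*((a-c)^2+(b-d)^2) := mul_nonneg (sq_nonneg _) (by positivity)
  rcases min_cases ((a-c)*(b-d)) 0 with ⟨h1,h1'⟩|⟨h1,h1'⟩ <;>
    rcases min_cases ((a-t*c)*(b-t*d)) 0 with ⟨h2,h2'⟩|⟨h2,h2'⟩ <;> rw [h1, h2]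
  · have key : 8*((a-t*c)^2+(b-t*d)^2 - 2*((a-t*c)*(b-t*d)))
        - (1+t)^2*((a-c)^2+(b-d)^2 - 2*((a-c)*(b-d)))
        = 2*(1-t)^2*((a+c)^2+(b+d)^2) + (1+t)^2*((a-c)+(b-d))^2
          - 16*((a-t*c)*(b-t*d)) := by
      linear_combination (4-4*t^2)*hu + (4*t^2-4)*hv
    linarith [key, hFc, hF2, hFS, h2']
  · have key : 8*((a-t*c)^2+(b-t*d)^2)
        - (1+t)^2*((a-c)^2+(b-d)^2 - 2*((a-c)*(b-d)))
        = 2*(1-t)^2*((a+c)^2+(b+d)^2) + (1+t)^2*((a-c)+(b-d))^2 := by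
      linear_combination (4-4*t^2)*hu + (4*t^2-4)*hv
    linarith [key, hFc, hF2, hFS]
  · have key : 8*((a-t*c)^2+(b-t*d)^2 - 2*((a-t*c)*(b-t*d)))
        - (1+t)^2*((a-c)^2+(b-d)^2)
        = (1+t)^2*((a-c)^2+(b-d)^2) + 2*(1-t)^2*((a+c)^2+(b+d)^2)
          - 16*((a-t*c)*(b-t*d)) := by
      linear_combination (4-4*t^2)*hu + (4*t^2-4)*hv
    linarith [key, hFc, hF2, hFE, h2']
  · have key : 8*((a-t*c)^2+(b-t*d)^2)
        - (1+t)^2*((a-c)^2+(b-d)^2)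
        = (1+t)^2*((a-c)^2+(b-d)^2) + 2*(1-t)^2*((a+c)^2+(b+d)^2) := by
      linear_combination (4-4*t^2)*hu + (4*t^2-4)*hv
    linarith [key, hFc, hF2, hFE]

lemma caseI_III (ht0 : 0 < t) (ht1 : t < 1)
    (ha : 0 ≤ a) (hb : 0 ≤ b) (hu : a^2+b^2 = 1)
    (hc : c ≤ 0) (hd : d ≤ 0) (hv : c^2+d^2 = 1) :
    (1+t)^2*((a-c)^2+(b-d)^2 - 2*min ((a-c)*(b-d)) 0)
      < 8*((a-t*c)^2+(b-t*d)^2 - 2*min ((a-t*c)*(b-t*d)) 0) := by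
  have hab : 1 ≤ a + b := by
    nlinarith [mul_nonneg ha hb, (show (0:ℝ) < 1+a+b by linarith)]
  have hS2 : 1 ≤ (a-c)+(b-d) := by linarith
  have hFS : 1 ≤ ((a-c)+(b-d))^2 := by nlinarith
  have hF2 : (0:ℝ) < (1-t)^2 := pow_pos (by linarith) 2
  have hT12 : (a-c)^2+(b-d)^2+((a+c)^2+(b+d)^2) = 4 := by
    linear_combination 2*hu + 2*hv
  have hFc : 0 ≤ (1-t)^2*((a+c)^2+(b+d)^2) := mul_nonneg (sq_nonneg _) (by positivity)
  have hFa : 0 ≤ t*((a-c)^2+(b-d)^2) := mul_nonneg ht0.le (by positivity)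
  have hFb : 0 ≤ (1-t)^2*((a-c)^2+(b-d)^2) := mul_nonneg (sq_nonneg _) (by positivity)
  have hFq : 0 ≤ (2*t+t^2)*((a-c)+(b-d))^2 := mul_nonneg (by nlinarith) (sq_nonneg _)
  rcases min_cases ((a-c)*(b-d)) 0 with ⟨h1,h1'⟩|⟨h1,h1'⟩ <;>
    rcases min_cases ((a-t*c)*(b-t*d)) 0 with ⟨h2,h2'⟩|⟨h2,h2'⟩ <;> rw [h1, h2]
  · have key : 8*((a-t*c)^2+(b-t*d)^2 - 2*((a-t*c)*(b-t*d)))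
        - (1+t)^2*((a-c)^2+(b-d)^2 - 2*((a-c)*(b-d)))
        = 2*(1-t)^2*((a+c)^2+(b+d)^2) + (1+t)^2*((a-c)+(b-d))^2
          - 16*((a-t*c)*(b-t*d)) := by
      linear_combination (4-4*t^2)*hu + (4*t^2-4)*hv
    linarith [key, hFc, hFS, hFq, h2']
  · have key : 8*((a-t*c)^2+(b-t*d)^2)
        - (1+t)^2*((a-c)^2+(b-d)^2 - 2*((a-c)*(b-d)))
        = 2*(1-t)^2*((a+c)^2+(b+d)^2) + (1+t)^2*((a-c)+(b-d))^2 := by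
      linear_combination (4-4*t^2)*hu + (4*t^2-4)*hv
    linarith [key, hFc, hFS, hFq]
  · have key : 8*((a-t*c)^2+(b-t*d)^2 - 2*((a-t*c)*(b-t*d)))
        - (1+t)^2*((a-c)^2+(b-d)^2)
        = (1+t)^2*((a-c)^2+(b-d)^2) + 2*(1-t)^2*((a+c)^2+(b+d)^2)
          - 16*((a-t*c)*(b-t*d)) := by
      linear_combination (4-4*t^2)*hu + (4*t^2-4)*hv
    linarith [key, hFa, hFb, hFc, hT12, hF2, h2',
      (show (1-t)^2*((a-c)^2+(b-d)^2+((a+c)^2+(b+d)^2)) = (1-t)^2*4 by rw [hT12])]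
  · have key : 8*((a-t*c)^2+(b-t*d)^2)
        - (1+t)^2*((a-c)^2+(b-d)^2)
        = (1+t)^2*((a-c)^2+(b-d)^2) + 2*(1-t)^2*((a+c)^2+(b+d)^2) := by
      linear_combination (4-4*t^2)*hu + (4*t^2-4)*hv
    linarith [key, hFa, hFb, hFc, hT12, hF2,
      (show (1-t)^2*((a-c)^2+(b-d)^2+((a+c)^2+(b+d)^2)) = (1-t)^2*4 by rw [hT12])]

end


section
variable (a b c d t : ℝ)

lemma caseI_II (ht0 : 0 < t) (ht1 : t < 1)
    (ha : 0 ≤ a) (hb : 0 ≤ b) (hu : a^2+b^2 = 1)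
    (hc : c < 0) (hd : 0 < d) (hv : d - c = 1) :
    (1+t)^2*((a-c)^2+(b-d)^2 - 2*min ((a-c)*(b-d)) 0)
      < 8*((a-t*c)^2+(b-t*d)^2 - 2*min ((a-t*c)*(b-t*d)) 0) := by
  have hd' : d = 1 + c := by linarith
  subst hd'
  have hcd : 0 < (-c)*(1+c) := mul_pos (by linarith) (by linarith)
  have hF2 : (0:ℝ) < (1-t)^2 := pow_pos (by linarith) 2
  have F1 : 0 ≤ (1-t)^2*((a+c)^2+(b+(1+c))^2) := mul_nonneg (sq_nonneg _) (by positivity)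
  have F2 : 0 ≤ (1-t)^2*((-c)*(1+c)) := mul_nonneg (sq_nonneg _) hcd.le
  have F3 : 0 ≤ t*((a-c)^2+(b-(1+c))^2) := mul_nonneg ht0.le (by positivity)
  have F4 : 0 < t*((1-t)*((-c)*(1+c))) := mul_pos ht0 (mul_pos (by linarith) hcd)
  have FS : 0 ≤ (1+t)^2*((a-c)+(b-(1+c)))^2 := mul_nonneg (sq_nonneg _) (sq_nonneg _)
  rcases min_cases ((a-c)*(b-(1+c))) 0 with ⟨h1,h1'⟩|⟨h1,h1'⟩ <;>
    rcases min_cases ((a-t*c)*(b-t*(1+c))) 0 with ⟨h2,h2'⟩|⟨h2,h2'⟩ <;> rw [h1, h2]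
  · have key : 8*((a-t*c)^2+(b-t*(1+c))^2 - 2*((a-t*c)*(b-t*(1+c))))
        - (1+t)^2*((a-c)^2+(b-(1+c))^2 - 2*((a-c)*(b-(1+c))))
        = 2*((1-t)^2*((a+c)^2+(b+(1+c))^2)) + 8*((1-t)^2*((-c)*(1+c)))
          + 16*(t*((1-t)*((-c)*(1+c)))) + (1+t)^2*((a-c)+(b-(1+c)))^2
          - 16*((a-t*c)*(b-t*(1+c))) := by
      linear_combination (4-4*t^2)*hu
    linarith [key, F1, F2, F4, FS, h2']
  · have key : 8*((a-t*c)^2+(b-t*(1+c))^2)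
        - (1+t)^2*((a-c)^2+(b-(1+c))^2 - 2*((a-c)*(b-(1+c))))
        = 2*((1-t)^2*((a+c)^2+(b+(1+c))^2)) + 8*((1-t)^2*((-c)*(1+c)))
          + 16*(t*((1-t)*((-c)*(1+c)))) + (1+t)^2*((a-c)+(b-(1+c)))^2 := by
      linear_combination (4-4*t^2)*hu
    linarith [key, F1, F2, F4, FS]
  · have key : 8*((a-t*c)^2+(b-t*(1+c))^2 - 2*((a-t*c)*(b-t*(1+c))))
        - (1+t)^2*((a-c)^2+(b-(1+c))^2)
        = 4*(1-t)^2 + (1-t)^2*((a+c)^2+(b+(1+c))^2) + 4*((1-t)^2*((-c)*(1+c)))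
          + 4*(t*((a-c)^2+(b-(1+c))^2)) + 16*(t*((1-t)*((-c)*(1+c))))
          - 16*((a-t*c)*(b-t*(1+c))) := by
      linear_combination (6-4*t-2*t^2)*hu
    linarith [key, hF2, F1, F2, F3, F4, h2']
  · have key : 8*((a-t*c)^2+(b-t*(1+c))^2)
        - (1+t)^2*((a-c)^2+(b-(1+c))^2)
        = 4*(1-t)^2 + (1-t)^2*((a+c)^2+(b+(1+c))^2) + 4*((1-t)^2*((-c)*(1+c)))
          + 4*(t*((a-c)^2+(b-(1+c))^2)) + 16*(t*((1-t)*((-c)*(1+c)))) := by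
      linear_combination (6-4*t-2*t^2)*hu
    linarith [key, hF2, F1, F2, F3, F4]

lemma caseII_II (ht0 : 0 < t) (ht1 : t < 1)
    (ha : a < 0) (hb : 0 < b) (hu : b - a = 1)
    (hc : c < 0) (hd : 0 < d) (hv : d - c = 1) :
    (1+t)^2*((a-c)^2+(b-d)^2 - 2*min ((a-c)*(b-d)) 0)
      < 8*((a-t*c)^2+(b-t*d)^2 - 2*min ((a-t*c)*(b-t*d)) 0) := by
  have hb' : b = 1 + a := by linarith
  subst hb'
  have hd' : d = 1 + c := by linarith
  subst hd'
  rcases min_cases ((a-c)*(1+a-(1+c))) 0 with ⟨h1,h1'⟩|⟨h1,h1'⟩ <;>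
    rcases min_cases ((a-t*c)*(1+a-t*(1+c))) 0 with ⟨h2,h2'⟩|⟨h2,h2'⟩ <;> rw [h1, h2]
  -- (w≤0, w'≤0)
  · have hz : (a - c)^2 ≤ 0 := by nlinarith [h1']
    nlinarith [pow_pos (show (0:ℝ) < 1-t by linarith) 2, sq_nonneg (a-c)]
  -- (w≤0, w'>0): w = (a-c)^2 ≤ 0 forces a = c, then w' = (1-t)^2*c*(1+c) < 0, contra
  · exfalso
    have hz : (a - c)^2 ≤ 0 := by nlinarith [h1']
    have hz2 : a - c = 0 := by nlinarith [sq_nonneg (a-c)]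
    have hpr : 0 < (1-t)^2*((-c)*(1+c)) :=
      mul_pos (pow_pos (by linarith) 2) (mul_pos (by linarith) (by linarith))
    nlinarith [h2', hpr, hz2, sq_nonneg (a-c)]
  -- (w>0, w'≤0): band case
  · have hY1 : a - t*c ≤ 0 := by
      rcases le_or_gt (a - t*c) 0 with h|h
      · exact h
      · exfalso
        have h5 : 0 < 1+a-t*(1+c) := by linarith
        nlinarith [mul_pos h h5]
    have hY2 : 0 ≤ 1+a-t*(1+c) := by
      rcases le_or_gt 0 (1+a-t*(1+c)) with h|h
      · exact h
      · exfalso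
        have h5 : a - t*c < 0 := by linarith
        nlinarith [mul_pos (neg_pos.2 h5) (neg_pos.2 h)]
    have hcc : (1-t)*(-c) < (1-t)*1 := by
      apply mul_lt_mul_of_pos_left (by linarith) (by linarith)
    have h3 : a - c < 1 - t := by nlinarith [hY1, hcc]
    have h4 : -(1-t) < a - c := by
      have h6 : (1-t)*c < 0 := mul_neg_of_pos_of_neg (by linarith) hc
      nlinarith [hY2, h6]
    have P : 0 < ((1-t)-(a-c))*((1-t)+(a-c)) :=
      mul_pos (by linarith) (by linarith)
    have Q2 : 0 ≤ (a-c)^2*((1-t)*(3+t)) :=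
      mul_nonneg (sq_nonneg _) (mul_nonneg (by linarith) (by linarith))
    nlinarith [P, Q2]
  -- (w>0, w'>0)
  · rcases mul_pos_iff.1 h2' with ⟨hY1,hY2⟩|⟨hY1,hY2⟩
    · have hd2 : 0 < a - c := by nlinarith [hY1, mul_pos (show (0:ℝ) < 1-t by linarith) (show (0:ℝ) < -c by linarith)]
      have FA : 0 < (1-t)*(2+a+c) := mul_pos (by linarith) (by linarith)
      have FB : 0 < 2*(1+a-t*(1+c)) + (1+t)*(a-c) := by
        have : 0 < (1+t)*(a-c) := mul_pos (by linarith) hd2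
        linarith [hY2]
      nlinarith [mul_pos FA FB, sq_nonneg (a-t*c)]
    · have hd2 : 0 < c - a := by
        have h7 : t*(1+c) < 1*(1+c) := by
          apply mul_lt_mul_of_pos_right ht1 (by linarith)
        linarith [hY2]
      have FA : 0 < (1-t)*(-a-c) := mul_pos (by linarith) (by linarith)
      have FB : 0 < 2*(t*c-a) + (1+t)*(c-a) := by
        have : 0 < (1+t)*(c-a) := mul_pos (by linarith) hd2
        linarith [hY1]
      nlinarith [mul_pos FA FB, sq_nonneg (1+a-t*(1+c))]

lemma caseII_IV (ht0 : 0 < t) (ht1 : t < 1)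
    (ha : a < 0) (hb : 0 < b) (hu : b - a = 1)
    (hc : 0 < c) (hd : d < 0) (hv : c - d = 1) :
    (1+t)^2*((a-c)^2+(b-d)^2 - 2*min ((a-c)*(b-d)) 0)
      < 8*((a-t*c)^2+(b-t*d)^2 - 2*min ((a-t*c)*(b-t*d)) 0) := by
  have hb' : b = 1 + a := by linarith
  subst hb'
  have hc' : c = 1 + d := by linarith
  subst hc'
  have hW : (a-(1+d))*(1+a-d) < 0 :=
    mul_neg_of_neg_of_pos (by linarith) (by linarith)
  have hW' : (a-t*(1+d))*(1+a-t*d) < 0 := by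
    apply mul_neg_of_neg_of_pos
    · nlinarith [mul_pos ht0 (show (0:ℝ) < 1+d by linarith)]
    · nlinarith [mul_pos ht0 (show (0:ℝ) < -d by linarith)]
  rcases min_cases ((a-(1+d))*(1+a-d)) 0 with ⟨h1,h1'⟩|⟨h1,h1'⟩ <;>
    rcases min_cases ((a-t*(1+d))*(1+a-t*d)) 0 with ⟨h2,h2'⟩|⟨h2,h2'⟩ <;> rw [h1, h2]
  · nlinarith [pow_pos (show (0:ℝ) < 1+t by linarith) 2]
  · exact absurd h2' (by linarith)
  · exact absurd h1' (by linarith)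
  · exact absurd h1' (by linarith)

end


section
variable (a b c d t : ℝ)

lemma caseII_I (ht0 : 0 < t) (ht1 : t < 1)
    (ha : a < 0) (hb : 0 < b) (hu : b - a = 1)
    (hc : 0 ≤ c) (hd : 0 ≤ d) (hv : c^2+d^2 = 1) :
    (1+t)^2*((a-c)^2+(b-d)^2 - 2*min ((a-c)*(b-d)) 0)
      < 8*((a-t*c)^2+(b-t*d)^2 - 2*min ((a-t*c)*(b-t*d)) 0) := by
  have hb' : b = 1 + a := by linarith
  subst hb'
  have hc1 : c ≤ 1 := by nlinarith
  have hd1 : d ≤ 1 := by nlinarith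
  have htc : 0 ≤ t*c := mul_nonneg ht0.le hc
  have htd : 0 ≤ t*d := mul_nonneg ht0.le hd
  have hX1 : a - c < 0 := by linarith
  have hY1 : a - t*c < 0 := by linarith
  rcases min_cases ((a-c)*(1+a-d)) 0 with ⟨h1,h1'⟩|⟨h1,h1'⟩ <;>
    rcases min_cases ((a-t*c)*(1+a-t*d)) 0 with ⟨h2,h2'⟩|⟨h2,h2'⟩ <;> rw [h1, h2]
  -- (w≤0, w'≤0): quadratic-in-δ case
  · linarith [(mul_nonneg (mul_nonneg (by linarith : (0:ℝ) ≤ (1-c)) (by linarith : (0:ℝ) ≤ (1-d))) (by linarith : (0:ℝ) ≤ (1-t))),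
      (mul_nonneg (mul_nonneg (by linarith : (0:ℝ) ≤ (1-c)) (by linarith : (0:ℝ) ≤ (1-t))) (by linarith : (0:ℝ) ≤ (1-t))),
      (mul_nonneg (by linarith : (0:ℝ) ≤ (1-d)) (by linarith : (0:ℝ) ≤ (1-d))),
      (mul_nonneg (mul_nonneg (by linarith : (0:ℝ) ≤ (1-d)) (by linarith : (0:ℝ) ≤ (1-d))) (by linarith : (0:ℝ) ≤ t)),
      (mul_nonneg (mul_nonneg (by linarith : (0:ℝ) ≤ (1-d)) (by linarith : (0:ℝ) ≤ t)) (by linarith : (0:ℝ) ≤ (1-t))),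
      (mul_nonneg (mul_nonneg (by linarith : (0:ℝ) ≤ c) (by linarith : (0:ℝ) ≤ (1-c))) (by linarith : (0:ℝ) ≤ (1-t))),
      (mul_nonneg (mul_nonneg (mul_nonneg (by linarith : (0:ℝ) ≤ c) (by linarith : (0:ℝ) ≤ (1-c))) (by linarith : (0:ℝ) ≤ t)) (by linarith : (0:ℝ) ≤ (1-t))),
      (mul_nonneg (mul_nonneg (by linarith : (0:ℝ) ≤ c) (by linarith : (0:ℝ) ≤ (1-d))) (by linarith : (0:ℝ) ≤ t)),
      (mul_nonneg (mul_nonneg (mul_nonneg (by linarith : (0:ℝ) ≤ c) (by linarith : (0:ℝ) ≤ (1-d))) (by linarith : (0:ℝ) ≤ t)) (by linarith : (0:ℝ) ≤ t)),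
      (mul_nonneg (mul_nonneg (mul_nonneg (by linarith : (0:ℝ) ≤ c) (by linarith : (0:ℝ) ≤ c)) (by linarith : (0:ℝ) ≤ t)) (by linarith : (0:ℝ) ≤ t)),
      (mul_nonneg (mul_nonneg (mul_nonneg (by linarith : (0:ℝ) ≤ c) (by linarith : (0:ℝ) ≤ d)) (by linarith : (0:ℝ) ≤ t)) (by linarith : (0:ℝ) ≤ (1-t))),
      (mul_nonneg (mul_nonneg (by linarith : (0:ℝ) ≤ d) (by linarith : (0:ℝ) ≤ (1-d))) (by linarith : (0:ℝ) ≤ (1-t))),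
      (mul_nonneg (mul_nonneg (mul_nonneg (by linarith : (0:ℝ) ≤ d) (by linarith : (0:ℝ) ≤ (1-d))) (by linarith : (0:ℝ) ≤ t)) (by linarith : (0:ℝ) ≤ (1-t))),
      (mul_nonneg (mul_nonneg (mul_nonneg (by linarith : (0:ℝ) ≤ d) (by linarith : (0:ℝ) ≤ d)) (by linarith : (0:ℝ) ≤ (1-t))) (by linarith : (0:ℝ) ≤ (1-t))),
      pow_pos (show (0:ℝ) < 1-t by linarith) 2]
  -- (w≤0, w'>0): empty
  · exfalso
    have hX2 : 0 ≤ 1+a-d := by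
      rcases le_or_gt 0 (1+a-d) with h|h
      · exact h
      · exfalso; nlinarith [mul_pos (neg_pos.2 hX1) (neg_pos.2 h)]
    have h6 : 0 ≤ 1+a-t*d := by nlinarith [mul_nonneg (show (0:ℝ) ≤ 1-t by linarith) hd]
    nlinarith [mul_nonneg (le_of_lt (neg_pos.2 hY1)) h6]
  -- (w>0, w'≤0): P case
  · have hm : 0 < d-(1+a) := by
      rcases lt_or_ge (1+a) d with h|h
      · linarith
      · exfalso; nlinarith [mul_pos (neg_pos.2 hX1) (show (0:ℝ) < -(d-(1+a)) + (1 - (1+a) - d + d) from by linarith)]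
    have he2 : 0 ≤ (1+a)-t*d := by
      rcases le_or_gt 0 ((1+a)-t*d) with h|h
      · exact h
      · exfalso; nlinarith [mul_pos (neg_pos.2 hY1) (neg_pos.2 h)]
    linarith [(mul_nonneg (mul_nonneg (by linarith : (0:ℝ) ≤ (1-d)) (by linarith : (0:ℝ) ≤ t)) (by linarith : (0:ℝ) ≤ ((1+a)-t*d))),
      (mul_nonneg (by linarith : (0:ℝ) ≤ (1-d)) (by linarith : (0:ℝ) ≤ (d-(1+a)))),
      (mul_nonneg (mul_nonneg (by linarith : (0:ℝ) ≤ c) (by linarith : (0:ℝ) ≤ (1-d))) (by linarith : (0:ℝ) ≤ t)),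
      (mul_nonneg (mul_nonneg (by linarith : (0:ℝ) ≤ c) (by linarith : (0:ℝ) ≤ t)) (by linarith : (0:ℝ) ≤ ((1+a)-t*d))),
      (mul_nonneg (mul_nonneg (mul_nonneg (by linarith : (0:ℝ) ≤ c) (by linarith : (0:ℝ) ≤ c)) (by linarith : (0:ℝ) ≤ t)) (by linarith : (0:ℝ) ≤ t)),
      (mul_nonneg (mul_nonneg (mul_nonneg (by linarith : (0:ℝ) ≤ c) (by linarith : (0:ℝ) ≤ c)) (by linarith : (0:ℝ) ≤ (1-t))) (by linarith : (0:ℝ) ≤ (1-t))),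
      (mul_nonneg (by linarith : (0:ℝ) ≤ c) (by linarith : (0:ℝ) ≤ ((1+a)-t*d))),
      (mul_nonneg (mul_nonneg (by linarith : (0:ℝ) ≤ c) (by linarith : (0:ℝ) ≤ (1-t))) (by linarith : (0:ℝ) ≤ (1-c))),
      (mul_nonneg (mul_nonneg (by linarith : (0:ℝ) ≤ (1-t)) (by linarith : (0:ℝ) ≤ (1-c))) (by linarith : (0:ℝ) ≤ ((1+a)-t*d))),
      (mul_nonneg (mul_nonneg (by linarith : (0:ℝ) ≤ (1-t)) (by linarith : (0:ℝ) ≤ (1-d))) (by linarith : (0:ℝ) ≤ t)),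
      (mul_nonneg (mul_nonneg (by linarith : (0:ℝ) ≤ (1-t)) (by linarith : (0:ℝ) ≤ (1+a))) (by linarith : (0:ℝ) ≤ (1-d))),
      (mul_nonneg (mul_nonneg (by linarith : (0:ℝ) ≤ (1-t)) (by linarith : (0:ℝ) ≤ ((1+a)-t*d))) (by linarith : (0:ℝ) ≤ (d-(1+a)))),
      (mul_nonneg (mul_nonneg (by linarith : (0:ℝ) ≤ (-a)) (by linarith : (0:ℝ) ≤ (1-c))) (by linarith : (0:ℝ) ≤ ((1+a)-t*d))),
      (mul_nonneg (by linarith : (0:ℝ) ≤ (-a)) (by linarith : (0:ℝ) ≤ (1-d))),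
      (mul_nonneg (mul_nonneg (by linarith : (0:ℝ) ≤ (-a)) (by linarith : (0:ℝ) ≤ (1-d))) (by linarith : (0:ℝ) ≤ t)),
      (mul_nonneg (mul_nonneg (by linarith : (0:ℝ) ≤ (-a)) (by linarith : (0:ℝ) ≤ t)) (by linarith : (0:ℝ) ≤ ((1+a)-t*d))),
      (mul_nonneg (mul_nonneg (mul_nonneg (by linarith : (0:ℝ) ≤ (-a)) (by linarith : (0:ℝ) ≤ c)) (by linarith : (0:ℝ) ≤ (1-d))) (by linarith : (0:ℝ) ≤ t)),
      (mul_nonneg (mul_nonneg (mul_nonneg (by linarith : (0:ℝ) ≤ (-a)) (by linarith : (0:ℝ) ≤ c)) (by linarith : (0:ℝ) ≤ (1+a))) (by linarith : (0:ℝ) ≤ t)),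
      (mul_nonneg (mul_nonneg (mul_nonneg (by linarith : (0:ℝ) ≤ (-a)) (by linarith : (0:ℝ) ≤ (1-t))) (by linarith : (0:ℝ) ≤ (1-t))) (by linarith : (0:ℝ) ≤ (1-c))),
      (mul_nonneg (mul_nonneg (mul_nonneg (by linarith : (0:ℝ) ≤ (-a)) (by linarith : (0:ℝ) ≤ (-a))) (by linarith : (0:ℝ) ≤ (1-t))) (by linarith : (0:ℝ) ≤ (1-c))),
      (mul_pos (mul_pos (mul_pos (by linarith : (0:ℝ) < (-a)) (by linarith : (0:ℝ) < (-a))) (by linarith : (0:ℝ) < (1-t))) (by linarith : (0:ℝ) < t))]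
  -- (w>0, w'>0): Q case
  · have he : 0 < t*d-(1+a) := by
      rcases lt_or_ge (1+a) (t*d) with h|h
      · linarith
      · exfalso
        nlinarith [mul_nonneg (le_of_lt (neg_pos.2 hY1)) (show (0:ℝ) ≤ (1+a)-t*d from by linarith)]
    linarith [(mul_nonneg (mul_nonneg (by linarith : (0:ℝ) ≤ (1-d)) (by linarith : (0:ℝ) ≤ t)) (by linarith : (0:ℝ) ≤ (t*d-(1+a)))),
      (mul_nonneg (by linarith : (0:ℝ) ≤ (1-d)) (by linarith : (0:ℝ) ≤ (t*d-(1+a)))),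
      (mul_nonneg (mul_nonneg (by linarith : (0:ℝ) ≤ c) (by linarith : (0:ℝ) ≤ (1-d))) (by linarith : (0:ℝ) ≤ t)),
      (mul_nonneg (mul_nonneg (mul_nonneg (by linarith : (0:ℝ) ≤ c) (by linarith : (0:ℝ) ≤ c)) (by linarith : (0:ℝ) ≤ t)) (by linarith : (0:ℝ) ≤ t)),
      (mul_nonneg (mul_nonneg (mul_nonneg (by linarith : (0:ℝ) ≤ c) (by linarith : (0:ℝ) ≤ c)) (by linarith : (0:ℝ) ≤ (1-t))) (by linarith : (0:ℝ) ≤ (1-t))),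
      (mul_nonneg (by linarith : (0:ℝ) ≤ c) (by linarith : (0:ℝ) ≤ (t*d-(1+a)))),
      (mul_nonneg (mul_nonneg (by linarith : (0:ℝ) ≤ c) (by linarith : (0:ℝ) ≤ (1-t))) (by linarith : (0:ℝ) ≤ (1-c))),
      (mul_nonneg (mul_nonneg (by linarith : (0:ℝ) ≤ d) (by linarith : (0:ℝ) ≤ (1-t))) (by linarith : (0:ℝ) ≤ (1-d))),
      (mul_nonneg (by linarith : (0:ℝ) ≤ (t*d-(1+a))) (by linarith : (0:ℝ) ≤ (t*d-(1+a)))),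
      (mul_nonneg (mul_nonneg (by linarith : (0:ℝ) ≤ (1-t)) (by linarith : (0:ℝ) ≤ (1-d))) (by linarith : (0:ℝ) ≤ t)),
      (mul_nonneg (mul_nonneg (by linarith : (0:ℝ) ≤ (1-t)) (by linarith : (0:ℝ) ≤ (1+a))) (by linarith : (0:ℝ) ≤ (1-d))),
      (mul_nonneg (by linarith : (0:ℝ) ≤ (-a)) (by linarith : (0:ℝ) ≤ (1-d))),
      (mul_nonneg (mul_nonneg (by linarith : (0:ℝ) ≤ (-a)) (by linarith : (0:ℝ) ≤ (1-d))) (by linarith : (0:ℝ) ≤ t)),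
      (mul_nonneg (mul_nonneg (mul_nonneg (by linarith : (0:ℝ) ≤ (-a)) (by linarith : (0:ℝ) ≤ c)) (by linarith : (0:ℝ) ≤ (1-d))) (by linarith : (0:ℝ) ≤ t)),
      (mul_nonneg (mul_nonneg (mul_nonneg (by linarith : (0:ℝ) ≤ (-a)) (by linarith : (0:ℝ) ≤ c)) (by linarith : (0:ℝ) ≤ (1+a))) (by linarith : (0:ℝ) ≤ t)),
      (mul_nonneg (mul_nonneg (by linarith : (0:ℝ) ≤ (-a)) (by linarith : (0:ℝ) ≤ c)) (by linarith : (0:ℝ) ≤ (t*d-(1+a)))),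
      (mul_nonneg (mul_nonneg (by linarith : (0:ℝ) ≤ (-a)) (by linarith : (0:ℝ) ≤ (1-t))) (by linarith : (0:ℝ) ≤ (t*d-(1+a)))),
      (mul_nonneg (mul_nonneg (mul_nonneg (by linarith : (0:ℝ) ≤ (-a)) (by linarith : (0:ℝ) ≤ (1-t))) (by linarith : (0:ℝ) ≤ (1-t))) (by linarith : (0:ℝ) ≤ (1-c))),
      (mul_nonneg (mul_nonneg (mul_nonneg (by linarith : (0:ℝ) ≤ (-a)) (by linarith : (0:ℝ) ≤ (-a))) (by linarith : (0:ℝ) ≤ (1-t))) (by linarith : (0:ℝ) ≤ (1-c))),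
      (mul_pos (mul_pos (mul_pos (by linarith : (0:ℝ) < (-a)) (by linarith : (0:ℝ) < (-a))) (by linarith : (0:ℝ) < (1-t))) (by linarith : (0:ℝ) < t))]

set_option maxHeartbeats 1000000 in
lemma caseII_III (ht0 : 0 < t) (ht1 : t < 1)
    (ha : a < 0) (hb : 0 < b) (hu : b - a = 1)
    (hc : c ≤ 0) (hd : d ≤ 0) (hv : c^2+d^2 = 1) :
    (1+t)^2*((a-c)^2+(b-d)^2 - 2*min ((a-c)*(b-d)) 0)
      < 8*((a-t*c)^2+(b-t*d)^2 - 2*min ((a-t*c)*(b-t*d)) 0) := by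
  have hb' : b = 1 + a := by linarith
  subst hb'
  have hc1 : -1 ≤ c := by nlinarith
  have hd1 : -1 ≤ d := by nlinarith
  have htc : t*c ≤ 0 := by nlinarith [mul_nonneg ht0.le (neg_nonneg.2 hc)]
  have htd : t*d ≤ 0 := by nlinarith [mul_nonneg ht0.le (neg_nonneg.2 hd)]
  have hX2 : 0 < 1+a-d := by linarith
  have hY2 : 0 < 1+a-t*d := by linarith
  rcases min_cases ((a-c)*(1+a-d)) 0 with ⟨h1,h1'⟩|⟨h1,h1'⟩ <;>
    rcases min_cases ((a-t*c)*(1+a-t*d)) 0 with ⟨h2,h2'⟩|⟨h2,h2'⟩ <;> rw [h1, h2]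
  -- (w≤0, w'≤0): N11
  · have hmX1 : 0 ≤ c - a := by
      rcases le_or_gt 0 (c-a) with h|h
      · exact h
      · exfalso; nlinarith [mul_pos (show (0:ℝ) < a-c by linarith) hX2]
    have hmY1 : 0 ≤ t*c - a := by
      rcases le_or_gt 0 (t*c-a) with h|h
      · exact h
      · exfalso; nlinarith [mul_pos (show (0:ℝ) < a-t*c by linarith) hY2]
    linarith [(mul_nonneg (mul_nonneg (by linarith : (0:ℝ) ≤ (1+d)) (by linarith : (0:ℝ) ≤ (1-t))) (by linarith : (0:ℝ) ≤ (t*c-a))),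
      (mul_nonneg (mul_nonneg (by linarith : (0:ℝ) ≤ (1+c)) (by linarith : (0:ℝ) ≤ (1+d))) (by linarith : (0:ℝ) ≤ (1-t))),
      (mul_nonneg (mul_nonneg (by linarith : (0:ℝ) ≤ (1+c)) (by linarith : (0:ℝ) ≤ t)) (by linarith : (0:ℝ) ≤ (1-t))),
      (mul_nonneg (mul_nonneg (by linarith : (0:ℝ) ≤ (1+c)) (by linarith : (0:ℝ) ≤ t)) (by linarith : (0:ℝ) ≤ (t*c-a))),
      (mul_nonneg (mul_nonneg (by linarith : (0:ℝ) ≤ (1+a)) (by linarith : (0:ℝ) ≤ (1+d))) (by linarith : (0:ℝ) ≤ (1-t))),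
      (mul_nonneg (mul_nonneg (by linarith : (0:ℝ) ≤ (1+a)) (by linarith : (0:ℝ) ≤ (1+c))) (by linarith : (0:ℝ) ≤ t)),
      (mul_nonneg (mul_nonneg (by linarith : (0:ℝ) ≤ (1+a)) (by linarith : (0:ℝ) ≤ (-d))) (by linarith : (0:ℝ) ≤ t)),
      (mul_nonneg (mul_nonneg (by linarith : (0:ℝ) ≤ (1+a)) (by linarith : (0:ℝ) ≤ (-c))) (by linarith : (0:ℝ) ≤ (1-t))),
      (mul_nonneg (mul_nonneg (by linarith : (0:ℝ) ≤ (-d)) (by linarith : (0:ℝ) ≤ (1+d))) (by linarith : (0:ℝ) ≤ (1-t))),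
      (mul_nonneg (mul_nonneg (mul_nonneg (by linarith : (0:ℝ) ≤ (-d)) (by linarith : (0:ℝ) ≤ (-d))) (by linarith : (0:ℝ) ≤ (1-t))) (by linarith : (0:ℝ) ≤ (1-t))),
      (mul_nonneg (mul_nonneg (mul_nonneg (by linarith : (0:ℝ) ≤ (-d)) (by linarith : (0:ℝ) ≤ (-d))) (by linarith : (0:ℝ) ≤ t)) (by linarith : (0:ℝ) ≤ t)),
      (mul_nonneg (mul_nonneg (by linarith : (0:ℝ) ≤ (-d)) (by linarith : (0:ℝ) ≤ t)) (by linarith : (0:ℝ) ≤ (1-t))),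
      (mul_nonneg (mul_nonneg (by linarith : (0:ℝ) ≤ (-d)) (by linarith : (0:ℝ) ≤ t)) (by linarith : (0:ℝ) ≤ (t*c-a))),
      (mul_nonneg (mul_nonneg (by linarith : (0:ℝ) ≤ (-c)) (by linarith : (0:ℝ) ≤ (1+c))) (by linarith : (0:ℝ) ≤ (1-t))),
      (mul_nonneg (mul_nonneg (by linarith : (0:ℝ) ≤ (-c)) (by linarith : (0:ℝ) ≤ (1-t))) (by linarith : (0:ℝ) ≤ (t*c-a))),
      (mul_nonneg (mul_nonneg (mul_nonneg (by linarith : (0:ℝ) ≤ (-c)) (by linarith : (0:ℝ) ≤ (-d))) (by linarith : (0:ℝ) ≤ t)) (by linarith : (0:ℝ) ≤ (1-t))),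
      pow_pos (show (0:ℝ) < 1-t by linarith) 2]
  -- (w≤0, w'>0): empty
  · exfalso
    have hmX1 : 0 ≤ c - a := by
      rcases le_or_gt 0 (c-a) with h|h
      · exact h
      · exfalso; nlinarith [mul_pos (show (0:ℝ) < a-c by linarith) hX2]
    have h7 : 0 < a - t*c := by
      rcases lt_or_ge (t*c) a with h|h
      · linarith
      · exfalso; nlinarith [mul_nonneg (show (0:ℝ) ≤ t*c-a by linarith) hY2.le]
    have h8 : (1-t)*c ≤ 0 := by nlinarith [mul_nonneg (show (0:ℝ) ≤ 1-t by linarith) (neg_nonneg.2 hc)]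
    linarith
  -- (w>0, w'≤0): N01
  · have hX1 : 0 < a - c := by
      rcases lt_or_ge c a with h|h
      · linarith
      · exfalso; nlinarith [mul_nonneg (show (0:ℝ) ≤ c-a by linarith) hX2.le]
    have hmY1 : 0 ≤ t*c - a := by
      rcases le_or_gt 0 (t*c-a) with h|h
      · exact h
      · exfalso; nlinarith [mul_pos (show (0:ℝ) < a-t*c by linarith) hY2]
    linarith [(mul_nonneg (mul_nonneg (by linarith : (0:ℝ) ≤ (1+d)) (by linarith : (0:ℝ) ≤ (1-t))) (by linarith : (0:ℝ) ≤ (t*c-a))),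
      (mul_nonneg (mul_nonneg (by linarith : (0:ℝ) ≤ (1+c)) (by linarith : (0:ℝ) ≤ (1+c))) (by linarith : (0:ℝ) ≤ t)),
      (mul_nonneg (by linarith : (0:ℝ) ≤ (1+c)) (by linarith : (0:ℝ) ≤ (a-c))),
      (mul_nonneg (mul_nonneg (by linarith : (0:ℝ) ≤ (1+c)) (by linarith : (0:ℝ) ≤ t)) (by linarith : (0:ℝ) ≤ (1-t))),
      (mul_nonneg (mul_nonneg (by linarith : (0:ℝ) ≤ (1+c)) (by linarith : (0:ℝ) ≤ t)) (by linarith : (0:ℝ) ≤ (t*c-a))),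
      (mul_nonneg (mul_nonneg (mul_nonneg (by linarith : (0:ℝ) ≤ (1+a)) (by linarith : (0:ℝ) ≤ (1+d))) (by linarith : (0:ℝ) ≤ (1-t))) (by linarith : (0:ℝ) ≤ (1-t))),
      (mul_nonneg (by linarith : (0:ℝ) ≤ (1+a)) (by linarith : (0:ℝ) ≤ (1+c))),
      (mul_nonneg (mul_nonneg (by linarith : (0:ℝ) ≤ (1+a)) (by linarith : (0:ℝ) ≤ (1+c))) (by linarith : (0:ℝ) ≤ t)),
      (mul_nonneg (mul_nonneg (mul_nonneg (by linarith : (0:ℝ) ≤ (1+a)) (by linarith : (0:ℝ) ≤ (1+a))) (by linarith : (0:ℝ) ≤ (1+d))) (by linarith : (0:ℝ) ≤ (1-t))),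
      (mul_nonneg (mul_nonneg (by linarith : (0:ℝ) ≤ (1+a)) (by linarith : (0:ℝ) ≤ t)) (by linarith : (0:ℝ) ≤ (t*c-a))),
      (mul_nonneg (mul_nonneg (by linarith : (0:ℝ) ≤ (-d)) (by linarith : (0:ℝ) ≤ (1+d))) (by linarith : (0:ℝ) ≤ (1-t))),
      (mul_nonneg (mul_nonneg (by linarith : (0:ℝ) ≤ (-d)) (by linarith : (0:ℝ) ≤ (1+c))) (by linarith : (0:ℝ) ≤ t)),
      (mul_nonneg (mul_nonneg (mul_nonneg (by linarith : (0:ℝ) ≤ (-d)) (by linarith : (0:ℝ) ≤ (-d))) (by linarith : (0:ℝ) ≤ (1-t))) (by linarith : (0:ℝ) ≤ (1-t))),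
      (mul_nonneg (mul_nonneg (mul_nonneg (by linarith : (0:ℝ) ≤ (-d)) (by linarith : (0:ℝ) ≤ (-d))) (by linarith : (0:ℝ) ≤ t)) (by linarith : (0:ℝ) ≤ t)),
      (mul_nonneg (mul_nonneg (by linarith : (0:ℝ) ≤ (-d)) (by linarith : (0:ℝ) ≤ t)) (by linarith : (0:ℝ) ≤ (t*c-a))),
      (mul_nonneg (by linarith : (0:ℝ) ≤ (a-c)) (by linarith : (0:ℝ) ≤ (t*c-a))),
      (mul_nonneg (mul_nonneg (by linarith : (0:ℝ) ≤ (-a)) (by linarith : (0:ℝ) ≤ (1+c))) (by linarith : (0:ℝ) ≤ (1-t))),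
      (mul_nonneg (mul_nonneg (mul_nonneg (by linarith : (0:ℝ) ≤ (-a)) (by linarith : (0:ℝ) ≤ (1+c))) (by linarith : (0:ℝ) ≤ (1-t))) (by linarith : (0:ℝ) ≤ (1-t))),
      (mul_pos (mul_pos (mul_pos (by linarith : (0:ℝ) < (-a)) (by linarith : (0:ℝ) < (1+a))) (by linarith : (0:ℝ) < (1-t))) (by linarith : (0:ℝ) < (1-t))),
      (mul_nonneg (mul_nonneg (mul_nonneg (by linarith : (0:ℝ) ≤ (-a)) (by linarith : (0:ℝ) ≤ (-a))) (by linarith : (0:ℝ) ≤ (-d))) (by linarith : (0:ℝ) ≤ (1-t)))]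
  -- (w>0, w'>0): N00
  · have hX1 : 0 < a - c := by
      rcases lt_or_ge c a with h|h
      · linarith
      · exfalso; nlinarith [mul_nonneg (show (0:ℝ) ≤ c-a by linarith) hX2.le]
    have hY1p : 0 < a - t*c := by
      rcases lt_or_ge (t*c) a with h|h
      · linarith
      · exfalso; nlinarith [mul_nonneg (show (0:ℝ) ≤ t*c-a by linarith) hY2.le]
    linarith [(mul_nonneg (mul_nonneg (by linarith : (0:ℝ) ≤ (1+c)) (by linarith : (0:ℝ) ≤ (1+c))) (by linarith : (0:ℝ) ≤ t)),
      (mul_nonneg (by linarith : (0:ℝ) ≤ (1+c)) (by linarith : (0:ℝ) ≤ (a-c))),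
      (mul_nonneg (by linarith : (0:ℝ) ≤ (1+c)) (by linarith : (0:ℝ) ≤ (a-t*c))),
      (mul_nonneg (mul_nonneg (by linarith : (0:ℝ) ≤ (1+c)) (by linarith : (0:ℝ) ≤ t)) (by linarith : (0:ℝ) ≤ (1-t))),
      (mul_nonneg (mul_nonneg (by linarith : (0:ℝ) ≤ (1+c)) (by linarith : (0:ℝ) ≤ t)) (by linarith : (0:ℝ) ≤ (a-t*c))),
      (mul_nonneg (mul_nonneg (mul_nonneg (by linarith : (0:ℝ) ≤ (1+a)) (by linarith : (0:ℝ) ≤ (1+d))) (by linarith : (0:ℝ) ≤ (1-t))) (by linarith : (0:ℝ) ≤ (1-t))),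
      (mul_nonneg (by linarith : (0:ℝ) ≤ (1+a)) (by linarith : (0:ℝ) ≤ (1+c))),
      (mul_nonneg (mul_nonneg (mul_nonneg (by linarith : (0:ℝ) ≤ (1+a)) (by linarith : (0:ℝ) ≤ (1+a))) (by linarith : (0:ℝ) ≤ (1+d))) (by linarith : (0:ℝ) ≤ (1-t))),
      (mul_nonneg (mul_nonneg (by linarith : (0:ℝ) ≤ (1+a)) (by linarith : (0:ℝ) ≤ (1-t))) (by linarith : (0:ℝ) ≤ (a-t*c))),
      (mul_nonneg (mul_nonneg (by linarith : (0:ℝ) ≤ (-d)) (by linarith : (0:ℝ) ≤ (1+d))) (by linarith : (0:ℝ) ≤ (1-t))),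
      (mul_nonneg (mul_nonneg (by linarith : (0:ℝ) ≤ (-d)) (by linarith : (0:ℝ) ≤ (1+c))) (by linarith : (0:ℝ) ≤ t)),
      (mul_nonneg (mul_nonneg (mul_nonneg (by linarith : (0:ℝ) ≤ (-d)) (by linarith : (0:ℝ) ≤ (-d))) (by linarith : (0:ℝ) ≤ (1-t))) (by linarith : (0:ℝ) ≤ (1-t))),
      (mul_nonneg (mul_nonneg (mul_nonneg (by linarith : (0:ℝ) ≤ (-d)) (by linarith : (0:ℝ) ≤ (-d))) (by linarith : (0:ℝ) ≤ t)) (by linarith : (0:ℝ) ≤ t)),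
      (mul_nonneg (by linarith : (0:ℝ) ≤ (-d)) (by linarith : (0:ℝ) ≤ (a-t*c))),
      (mul_nonneg (by linarith : (0:ℝ) ≤ (a-t*c)) (by linarith : (0:ℝ) ≤ (a-t*c))),
      (mul_nonneg (mul_nonneg (by linarith : (0:ℝ) ≤ (-a)) (by linarith : (0:ℝ) ≤ (1+c))) (by linarith : (0:ℝ) ≤ (1-t))),
      (mul_nonneg (mul_nonneg (mul_nonneg (by linarith : (0:ℝ) ≤ (-a)) (by linarith : (0:ℝ) ≤ (1+c))) (by linarith : (0:ℝ) ≤ (1-t))) (by linarith : (0:ℝ) ≤ (1-t))),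
      (mul_pos (mul_pos (mul_pos (by linarith : (0:ℝ) < (-a)) (by linarith : (0:ℝ) < (1+a))) (by linarith : (0:ℝ) < (1-t))) (by linarith : (0:ℝ) < (1-t))),
      (mul_nonneg (mul_nonneg (mul_nonneg (by linarith : (0:ℝ) ≤ (-a)) (by linarith : (0:ℝ) ≤ (-a))) (by linarith : (0:ℝ) ≤ (-d))) (by linarith : (0:ℝ) ≤ (1-t)))]

end


lemma sign_split {x y : ℝ} (h : 0 ≤ x*y) : (0 ≤ x ∧ 0 ≤ y) ∨ (x ≤ 0 ∧ y ≤ 0) := by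
  rcases le_total 0 x with hx|hx <;> rcases le_total 0 y with hy|hy
  · exact Or.inl ⟨hx,hy⟩
  · rcases mul_eq_zero.1 (le_antisymm (mul_nonpos_iff.2 (Or.inl ⟨hx,hy⟩)) h) with h0|h0
    · exact Or.inr ⟨h0.le, hy⟩
    · exact Or.inl ⟨hx, h0.ge⟩
  · rcases mul_eq_zero.1 (le_antisymm (mul_nonpos_iff.2 (Or.inr ⟨hx,hy⟩)) h) with h0|h0
    · exact Or.inl ⟨h0.ge, hy⟩
    · exact Or.inr ⟨hx, h0.le⟩
  · exact Or.inr ⟨hx,hy⟩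

set_option maxHeartbeats 1000000 in
lemma master (a b c d t : ℝ) (ht0 : 0 < t) (ht1 : t < 1)
    (hu : l2l1Norm (a,b) = 1) (hv : l2l1Norm (c,d) = 1) :
    (1+t)^2*((a-c)^2+(b-d)^2 - 2*min ((a-c)*(b-d)) 0)
      < 8*((a-t*c)^2+(b-t*d)^2 - 2*min ((a-t*c)*(b-t*d)) 0) := by
  unfold l2l1Norm at hu hv
  dsimp only at hu hv
  by_cases h1 : 0 ≤ a*b <;> by_cases h2 : 0 ≤ c*d
  · rw [if_pos h1] at hu
    rw [if_pos h2] at hv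
    have hu' : a^2+b^2 = 1 := Real.sqrt_eq_one.1 hu
    have hv' : c^2+d^2 = 1 := Real.sqrt_eq_one.1 hv
    rcases sign_split h1 with ⟨ha,hb⟩|⟨ha,hb⟩ <;> rcases sign_split h2 with ⟨hc,hd⟩|⟨hc,hd⟩
    · exact caseI_I a b c d t ht0 ht1 ha hb hu' hc hd hv'
    · exact caseI_III a b c d t ht0 ht1 ha hb hu' hc hd hv'
    · have H := caseI_III (-a) (-b) (-c) (-d) t ht0 ht1 (by linarith) (by linarith)
        (by linear_combination hu') (by linarith) (by linarith) (by linear_combination hv')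
      rw [show ((-a)-(-c))*((-b)-(-d)) = (a-c)*(b-d) by ring,
          show ((-a)-t*(-c))*((-b)-t*(-d)) = (a-t*c)*(b-t*d) by ring] at H
      linarith [H]
    · have H := caseI_I (-a) (-b) (-c) (-d) t ht0 ht1 (by linarith) (by linarith)
        (by linear_combination hu') (by linarith) (by linarith) (by linear_combination hv')
      rw [show ((-a)-(-c))*((-b)-(-d)) = (a-c)*(b-d) by ring,
          show ((-a)-t*(-c))*((-b)-t*(-d)) = (a-t*c)*(b-t*d) by ring] at H
      linarith [H]
  · rw [if_pos h1] at hu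
    rw [if_neg h2] at hv
    have hu' : a^2+b^2 = 1 := Real.sqrt_eq_one.1 hu
    push_neg at h2
    rcases mul_neg_iff.1 h2 with ⟨hc,hd⟩|⟨hc,hd⟩
    · -- v ∈ IV : 0 < c, d < 0
      have hv' : c - d = 1 := by
        rw [abs_of_pos hc, abs_of_neg hd] at hv; linarith
      rcases sign_split h1 with ⟨ha,hb⟩|⟨ha,hb⟩
      · -- u ∈ I : swap to (I,II)
        have H := caseI_II b a d c t ht0 ht1 hb ha (by linear_combination hu') hd hc
          (by linarith)
        rw [show (b-d)*(a-c) = (a-c)*(b-d) by ring,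
            show (b-t*d)*(a-t*c) = (a-t*c)*(b-t*d) by ring] at H
        linarith [H]
      · -- u ∈ III : negate to (I,II)
        have H := caseI_II (-a) (-b) (-c) (-d) t ht0 ht1 (by linarith) (by linarith)
          (by linear_combination hu') (by linarith) (by linarith) (by linarith)
        rw [show ((-a)-(-c))*((-b)-(-d)) = (a-c)*(b-d) by ring,
            show ((-a)-t*(-c))*((-b)-t*(-d)) = (a-t*c)*(b-t*d) by ring] at H
        linarith [H]
    · -- v ∈ II : c < 0 < d
      have hv' : d - c = 1 := by
        rw [abs_of_neg hc, abs_of_pos hd] at hv; linarith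
      rcases sign_split h1 with ⟨ha,hb⟩|⟨ha,hb⟩
      · exact caseI_II a b c d t ht0 ht1 ha hb hu' hc hd hv'
      · -- u ∈ III : neg-swap to (I,II)
        have H := caseI_II (-b) (-a) (-d) (-c) t ht0 ht1 (by linarith) (by linarith)
          (by linear_combination hu') (by linarith) (by linarith) (by linarith)
        rw [show ((-b)-(-d))*((-a)-(-c)) = (a-c)*(b-d) by ring,
            show ((-b)-t*(-d))*((-a)-t*(-c)) = (a-t*c)*(b-t*d) by ring] at H
        linarith [H]
  · rw [if_neg h1] at hu
    rw [if_pos h2] at hv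
    have hv' : c^2+d^2 = 1 := Real.sqrt_eq_one.1 hv
    push_neg at h1
    rcases mul_neg_iff.1 h1 with ⟨ha,hb⟩|⟨ha,hb⟩
    · -- u ∈ IV : 0 < a, b < 0 : swap
      have hu' : a - b = 1 := by
        rw [abs_of_pos ha, abs_of_neg hb] at hu; linarith
      rcases sign_split h2 with ⟨hc,hd⟩|⟨hc,hd⟩
      · have H := caseII_I b a d c t ht0 ht1 hb ha (by linarith) hd hc
          (by linear_combination hv')
        rw [show (b-d)*(a-c) = (a-c)*(b-d) by ring,
            show (b-t*d)*(a-t*c) = (a-t*c)*(b-t*d) by ring] at H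
        linarith [H]
      · have H := caseII_III b a d c t ht0 ht1 hb ha (by linarith) hd hc
          (by linear_combination hv')
        rw [show (b-d)*(a-c) = (a-c)*(b-d) by ring,
            show (b-t*d)*(a-t*c) = (a-t*c)*(b-t*d) by ring] at H
        linarith [H]
    · -- u ∈ II : a < 0 < b
      have hu' : b - a = 1 := by
        rw [abs_of_neg ha, abs_of_pos hb] at hu; linarith
      rcases sign_split h2 with ⟨hc,hd⟩|⟨hc,hd⟩
      · exact caseII_I a b c d t ht0 ht1 ha hb hu' hc hd hv'
      · exact caseII_III a b c d t ht0 ht1 ha hb hu' hc hd hv'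
  · rw [if_neg h1] at hu
    rw [if_neg h2] at hv
    push_neg at h1 h2
    rcases mul_neg_iff.1 h1 with ⟨ha,hb⟩|⟨ha,hb⟩ <;> rcases mul_neg_iff.1 h2 with ⟨hc,hd⟩|⟨hc,hd⟩
    · -- u ∈ IV, v ∈ IV : swap to (II,II)
      have hu' : a - b = 1 := by rw [abs_of_pos ha, abs_of_neg hb] at hu; linarith
      have hv' : c - d = 1 := by rw [abs_of_pos hc, abs_of_neg hd] at hv; linarith
      have H := caseII_II b a d c t ht0 ht1 hb ha (by linarith) hd hc (by linarith)
      rw [show (b-d)*(a-c) = (a-c)*(b-d) by ring,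
          show (b-t*d)*(a-t*c) = (a-t*c)*(b-t*d) by ring] at H
      linarith [H]
    · -- u ∈ IV, v ∈ II : swap to (II,IV)
      have hu' : a - b = 1 := by rw [abs_of_pos ha, abs_of_neg hb] at hu; linarith
      have hv' : d - c = 1 := by rw [abs_of_neg hc, abs_of_pos hd] at hv; linarith
      have H := caseII_IV b a d c t ht0 ht1 hb ha (by linarith) hd hc (by linarith)
      rw [show (b-d)*(a-c) = (a-c)*(b-d) by ring,
          show (b-t*d)*(a-t*c) = (a-t*c)*(b-t*d) by ring] at H
      linarith [H]
    · -- u ∈ II, v ∈ IV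
      have hu' : b - a = 1 := by rw [abs_of_neg ha, abs_of_pos hb] at hu; linarith
      have hv' : c - d = 1 := by rw [abs_of_pos hc, abs_of_neg hd] at hv; linarith
      exact caseII_IV a b c d t ht0 ht1 ha hb hu' hc hd hv'
    · -- u ∈ II, v ∈ II
      have hu' : b - a = 1 := by rw [abs_of_neg ha, abs_of_pos hb] at hu; linarith
      have hv' : d - c = 1 := by rw [abs_of_neg hc, abs_of_pos hd] at hv; linarith
      exact caseII_II a b c d t ht0 ht1 ha hb hu' hc hd hv'

/-- The supremum `2√2` defining the Dunkl–Williams constant of the `ℓ₂–ℓ₁` plane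
is not attained: every quotient is strictly less than `2√2`. -/
theorem dunkl_williams_l2l1_not_attained :
    ∀ u v : ℝ × ℝ, l2l1Norm u = 1 → l2l1Norm v = 1 → ∀ t : ℝ, 0 < t → t < 1 →
      (1 + t) * l2l1Norm (u - v) / l2l1Norm (u - t • v) < 2 * Real.sqrt 2 := by
  rintro ⟨a,b⟩ ⟨c,d⟩ hu hv t ht0 ht1
  have hsub1 : ((a,b) - (c,d) : ℝ×ℝ) = (a-c, b-d) := rfl
  have hsub2 : ((a,b) - t•((c,d) : ℝ×ℝ) : ℝ×ℝ) = (a-t*c, b-t*d) := rfl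
  have hden : 0 < l2l1Norm ((a,b) - t•((c,d) : ℝ×ℝ)) := by
    rw [hsub2]
    apply l2l1_pos
    rintro ⟨hz1,hz2⟩
    have ha' : a = t*c := by linarith
    have hb' : b = t*d := by linarith
    rw [ha', hb', l2l1_smul t c d ht0.le, hv, mul_one] at hu
    linarith
  rw [div_lt_iff₀ hden, hsub1, hsub2, l2l1_eq, l2l1_eq]
  apply lt_2sqrt2 (Real.sqrt_nonneg _)
  rw [mul_pow, Real.sq_sqrt (arg_nonneg (a-c) (b-d)),
    Real.sq_sqrt (arg_nonneg (a-t*c) (b-t*d))]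
  exact master a b c d t ht0 ht1 hu hv
end
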